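/- arXiv:2408.05232 — 6 statements merged into one kernel-verified Lean document; each statement's English description precedes it below -/
import Mathlib

section
/- Suppose w : ℝⁿ → ℂ is almost periodic (a uniform limit of trigonometric polynomials), takes values in ℝ^{≥0}, and has mean value M(w) = 0. Then w = 0 identically. -/
open MeasureTheory Filter

/-- A bounded measurable `w : ℝⁿ → ℂ` has *mean value* `M` if
`T⁻ⁿ ∫_{[0,T]ⁿ} w(s) ds → M` as `T → ∞`. -/
def HasMeanValue {n : ℕ} (w : (Fin n → ℝ) → ℂ) (M : ℂ) : Prop :=
  Tendsto (fun T : ℝ =>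
      ((T : ℂ) ^ n)⁻¹ * ∫ s in Set.Icc (0 : Fin n → ℝ) (fun _ => T), w s)
    atTop (nhds M)

/-- A *trigonometric polynomial* on `ℝⁿ` is a finite `ℂ`-linear combination of the
characters `s ↦ e^{i(α·s)}`, `α ∈ ℝⁿ`. -/
def IsTrigPoly {n : ℕ} (p : (Fin n → ℝ) → ℂ) : Prop :=
  ∃ (A : Finset (Fin n → ℝ)) (c : (Fin n → ℝ) → ℂ),
    ∀ s, p s = ∑ α ∈ A, c α * Complex.exp (Complex.I * (↑(∑ i, α i * s i) : ℂ))

/-- `w : ℝⁿ → ℂ` is *almost periodic* (in the sense of Bohr) if it is a uniform limit of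
trigonometric polynomials. -/
def AlmostPeriodic {n : ℕ} (w : (Fin n → ℝ) → ℂ) : Prop :=
  ∀ ε : ℝ, 0 < ε → ∃ p, IsTrigPoly p ∧ ∀ s, ‖w s - p s‖ ≤ ε

/-! If `w s₀ = δ > 0`, continuity gives `w ≥ δ / 2` on a ball of radius `r` around `s₀`. By
Bohr's theorem on almost periods, the `δ / 4`-almost periods `τ` (those with
`sup ‖w (· + τ) - w‖ ≤ δ / 4`) come within a fixed distance `L` of every point; for a
trigonometric polynomial this is the simultaneous recurrence of finitely many characters, a
compactness argument. So every ball of radius `L + r` contains a ball of radius `r` on which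
`w ≥ δ / 4`, whence `∫_{[0,T]ⁿ} w ≥ c Tⁿ` for some `c > 0` and the mean of `w` is positive. -/

open Metric Topology

lemma MeasureTheory.LocallyIntegrable.integrableOn_ball {X E : Type*} [PseudoMetricSpace X]
    [ProperSpace X] [MeasurableSpace X] [NormedAddCommGroup E] {μ : Measure X} {f : X → E}
    (hf : LocallyIntegrable f μ) (x : X) (r : ℝ) : IntegrableOn f (ball x r) μ :=
  (hf.integrableOn_isCompact (isCompact_closedBall x r)).mono_set ball_subset_closedBall

section Characters

variable {n : ℕ}

noncomputable def expChar (α s : Fin n → ℝ) : ℂ := Complex.exp (Complex.I * ↑(α ⬝ᵥ s))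

lemma norm_expChar (α s : Fin n → ℝ) : ‖expChar α s‖ = 1 :=
  Complex.norm_exp_I_mul_ofReal _

lemma expChar_add (α s t : Fin n → ℝ) : expChar α (s + t) = expChar α s * expChar α t := by
  simp only [expChar, dotProduct_add, Complex.ofReal_add, mul_add, Complex.exp_add]

lemma norm_expChar_sub_sub_one (α s t : Fin n → ℝ) :
    ‖expChar α (s - t) - 1‖ = ‖expChar α s - expChar α t‖ := by
  conv_rhs => rw [← sub_add_cancel s t, expChar_add, ← sub_one_mul, norm_mul, norm_expChar, mul_one]

lemma continuous_expChar (α : Fin n → ℝ) : Continuous (expChar α) := by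
  unfold expChar
  fun_prop

lemma IsTrigPoly.eq_sum_expChar {p : (Fin n → ℝ) → ℂ} (hp : IsTrigPoly p) :
    ∃ (A : Finset (Fin n → ℝ)) (c : (Fin n → ℝ) → ℂ), ∀ s, p s = ∑ α ∈ A, c α * expChar α s :=
  hp

lemma IsTrigPoly.continuous {p : (Fin n → ℝ) → ℂ} (hp : IsTrigPoly p) : Continuous p := by
  obtain ⟨A, c, hpc⟩ := hp.eq_sum_expChar
  rw [funext hpc]
  exact continuous_finsetSum _ fun α _ => continuous_const.mul (continuous_expChar α)

end Characters

section AlmostPeriods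

variable {n : ℕ}

def IsAlmostPeriod {G E : Type*} [Add G] [SeminormedAddGroup E] (w : G → E) (ε : ℝ) (τ : G) :
    Prop :=
  ∀ s, ‖w (s + τ) - w s‖ ≤ ε

def RelativelyDenseAlmostPeriods {G E : Type*} [SeminormedAddGroup G] [SeminormedAddGroup E]
    (w : G → E) : Prop :=
  ∀ ε > 0, ∃ L, ∀ t : G, ∃ τ, ‖t - τ‖ ≤ L ∧ IsAlmostPeriod w ε τ

lemma RelativelyDenseAlmostPeriods.re {G : Type*} [SeminormedAddGroup G] {w : G → ℂ}
    (hw : RelativelyDenseAlmostPeriods w) : RelativelyDenseAlmostPeriods fun s => (w s).re :=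
  fun ε hε => (hw ε hε).imp fun _ hL t => (hL t).imp fun _ ⟨htτ, hτ⟩ => ⟨htτ, fun s => by
    simpa only [Complex.sub_re, Real.norm_eq_abs] using (Complex.abs_re_le_norm _).trans (hτ s)⟩

/-- Kronecker-type recurrence: the vector of characters `(expChar α t)_{α ∈ A}` ranges over a
totally bounded set, so finitely many `t₀` approximate all of its values, and `τ = t - t₀` works. -/
lemma exists_near_forall_norm_expChar_sub_one_le (A : Finset (Fin n → ℝ)) {η : ℝ} (hη : 0 < η) :
    ∃ L, ∀ t : Fin n → ℝ, ∃ τ, ‖t - τ‖ ≤ L ∧ ∀ α ∈ A, ‖expChar α τ - 1‖ ≤ η := by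
  let f : (Fin n → ℝ) → (A → ℂ) := fun t α => expChar α t
  have hbdd : Bornology.IsBounded (Set.range f) := by
    refine isBounded_iff_forall_norm_le.2 ⟨1, ?_⟩
    rintro _ ⟨t, rfl⟩
    exact (pi_norm_le_iff_of_nonneg zero_le_one).2 fun α => (norm_expChar _ _).le
  obtain ⟨S, hS⟩ := hbdd.isCompact_closure.elim_finite_subcover (fun t => ball (f t) η)
    (fun _ => isOpen_ball) fun x hx => by
      obtain ⟨_, ⟨t, rfl⟩, hxt⟩ := Metric.mem_closure_iff.1 hx η hη
      exact Set.mem_iUnion.2 ⟨t, mem_ball.2 hxt⟩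
  refine ⟨∑ t ∈ S, ‖t‖, fun t => ?_⟩
  obtain ⟨t₀, ht₀S, ht₀⟩ := Set.mem_iUnion₂.1 (hS (subset_closure (Set.mem_range_self t)))
  refine ⟨t - t₀, ?_, fun α hα => ?_⟩
  · rw [sub_sub_cancel]
    exact Finset.single_le_sum (f := fun t => ‖t‖) (fun _ _ => norm_nonneg _) ht₀S
  · rw [norm_expChar_sub_sub_one, ← dist_eq_norm]
    exact (dist_le_pi_dist (f t) (f t₀) ⟨α, hα⟩).trans (mem_ball.1 ht₀).le

lemma IsTrigPoly.relativelyDenseAlmostPeriods {p : (Fin n → ℝ) → ℂ} (hp : IsTrigPoly p) :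
    RelativelyDenseAlmostPeriods p := by
  intro ε hε
  obtain ⟨A, c, hpc⟩ := hp.eq_sum_expChar
  set K := ∑ α ∈ A, ‖c α‖
  have hK : 0 ≤ K := Finset.sum_nonneg fun _ _ => norm_nonneg _
  obtain ⟨L, hL⟩ := exists_near_forall_norm_expChar_sub_one_le A (η := ε / (K + 1)) (by positivity)
  refine ⟨L, fun t => ?_⟩
  obtain ⟨τ, htτ, hτ⟩ := hL t
  refine ⟨τ, htτ, fun s => ?_⟩
  have hdiff : p (s + τ) - p s = ∑ α ∈ A, c α * expChar α s * (expChar α τ - 1) := by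
    simp only [hpc, expChar_add, ← Finset.sum_sub_distrib]
    exact Finset.sum_congr rfl fun _ _ => by ring
  calc ‖p (s + τ) - p s‖ ≤ ∑ α ∈ A, ‖c α‖ * (ε / (K + 1)) := by
        rw [hdiff]
        refine (norm_sum_le _ _).trans (Finset.sum_le_sum fun α hα => ?_)
        rw [norm_mul, norm_mul, norm_expChar, mul_one]
        exact mul_le_mul_of_nonneg_left (hτ α hα) (norm_nonneg _)
    _ = K / (K + 1) * ε := by rw [← Finset.sum_mul]; ring
    _ ≤ ε := mul_le_of_le_one_left hε.le ((div_le_one (by positivity)).2 (by linarith))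

lemma AlmostPeriodic.relativelyDenseAlmostPeriods {w : (Fin n → ℝ) → ℂ}
    (hw : AlmostPeriodic w) : RelativelyDenseAlmostPeriods w := by
  intro ε hε
  obtain ⟨p, hp, hwp⟩ := hw (ε / 3) (by positivity)
  obtain ⟨L, hL⟩ := hp.relativelyDenseAlmostPeriods (ε / 3) (by positivity)
  refine ⟨L, fun t => ?_⟩
  obtain ⟨τ, htτ, hτ⟩ := hL t
  refine ⟨τ, htτ, fun s => ?_⟩
  calc ‖w (s + τ) - w s‖ = ‖(w (s + τ) - p (s + τ)) + (p (s + τ) - p s) + (p s - w s)‖ := by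
        congr 1; abel
    _ ≤ ‖w (s + τ) - p (s + τ)‖ + ‖p (s + τ) - p s‖ + ‖p s - w s‖ := norm_add₃_le
    _ ≤ ε / 3 + ε / 3 + ε / 3 := by gcongr; exacts [hwp _, hτ s, norm_sub_rev (p s) _ ▸ hwp s]
    _ = ε := by ring

lemma AlmostPeriodic.continuous {w : (Fin n → ℝ) → ℂ} (hw : AlmostPeriodic w) : Continuous w :=
  continuous_of_uniform_approx_of_continuous fun _ hU => by
    obtain ⟨ε, hε, hεU⟩ := mem_uniformity_dist.1 hU
    obtain ⟨p, hp, hwp⟩ := hw (ε / 2) (by positivity)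
    exact ⟨p, hp.continuous, fun s => hεU <| (dist_eq_norm _ _).trans_lt <|
      (hwp s).trans_lt (half_lt_self hε)⟩

end AlmostPeriods

section MeanValue

variable {n : ℕ} {u : (Fin n → ℝ) → ℝ}

lemma mul_pow_le_setIntegral_ball (hu : LocallyIntegrable u) {q : Fin n → ℝ} {r c : ℝ}
    (hr : 0 < r) (hc : ∀ x ∈ ball q r, c ≤ u x) : c * (2 * r) ^ n ≤ ∫ x in ball q r, u x :=
  calc c * (2 * r) ^ n = ∫ _ in ball q r, c := by
        rw [setIntegral_const, smul_eq_mul, measureReal_def, Real.volume_pi_ball q hr,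
          ENNReal.toReal_ofReal (by positivity), Fintype.card_fin, mul_comm]
    _ ≤ ∫ x in ball q r, u x :=
        setIntegral_mono_on (integrableOn_const measure_ball_lt_top.ne)
          (hu.integrableOn_ball q r) measurableSet_ball hc

/-- The open sup-norm balls of radius `R` centred at the points of `R + 2Rℤⁿ` inside `[0, 2Rm]ⁿ`
are disjoint, and there are `mⁿ` of them. -/
lemma natCast_pow_mul_le_setIntegral_Icc (hu0 : 0 ≤ u) (hu : LocallyIntegrable u) {R a : ℝ}
    (hR : 0 < R) (h : ∀ t, a ≤ ∫ x in ball t R, u x) (m : ℕ) :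
    (m : ℝ) ^ n * a ≤ ∫ x in Set.Icc 0 (fun _ => 2 * R * m), u x := by
  let center : (Fin n → Fin m) → Fin n → ℝ := fun k i => 2 * R * (k i : ℕ) + R
  have mem_ball_center : ∀ k x, x ∈ ball (center k) R ↔
      ∀ i, 2 * R * (k i : ℕ) < x i ∧ x i < 2 * R * ((k i : ℕ) + 1) := by
    intro k x
    simp only [mem_ball, dist_pi_lt_iff hR, Real.dist_eq, abs_lt, center]
    exact forall_congr' fun i => by constructor <;> rintro ⟨h₁, h₂⟩ <;> constructor <;> linarith
  have hsub : ∀ k, ball (center k) R ⊆ Set.Icc 0 (fun _ => 2 * R * m) := by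
    intro k x hx
    rw [mem_ball_center] at hx
    refine ⟨fun i => ?_, fun i => ?_⟩
    · exact (by positivity : (0 : ℝ) ≤ 2 * R * (k i : ℕ)).trans (hx i).1.le
    · have hkm : ((k i : ℕ) : ℝ) + 1 ≤ m := by exact_mod_cast (k i).isLt
      exact (hx i).2.le.trans (mul_le_mul_of_nonneg_left hkm (by positivity))
  have hdisj : Pairwise (Function.onFun Disjoint fun k => ball (center k) R) := by
    intro k k' hkk'
    obtain ⟨i, hi⟩ := Function.ne_iff.1 hkk'
    refine Set.disjoint_left.2 fun x hx hx' => hi (Fin.ext ?_)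
    rw [mem_ball_center] at hx hx'
    have h₁ : ((k i : ℕ) : ℝ) < (k' i : ℕ) + 1 :=
      lt_of_mul_lt_mul_left ((hx i).1.trans (hx' i).2) (by positivity)
    have h₂ : ((k' i : ℕ) : ℝ) < (k i : ℕ) + 1 :=
      lt_of_mul_lt_mul_left ((hx' i).1.trans (hx i).2) (by positivity)
    norm_cast at h₁ h₂
    omega
  calc (m : ℝ) ^ n * a = ∑ _k : Fin n → Fin m, a := by simp
    _ ≤ ∑ k, ∫ x in ball (center k) R, u x := Finset.sum_le_sum fun k _ => h _
    _ = ∫ x in ⋃ k, ball (center k) R, u x :=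
        (integral_iUnion_fintype (fun _ => measurableSet_ball) hdisj
          fun _ => hu.integrableOn_ball _ _).symm
    _ ≤ ∫ x in Set.Icc 0 (fun _ => 2 * R * m), u x :=
        setIntegral_mono_set (hu.integrableOn_isCompact isCompact_Icc)
          (Eventually.of_forall hu0) (Set.iUnion_subset hsub).eventuallyLE

lemma div_pow_le_of_tendsto_mean (hu0 : 0 ≤ u) (hu : LocallyIntegrable u) {R a : ℝ} (hR : 0 < R)
    (h : ∀ t, a ≤ ∫ x in ball t R, u x) {M : ℝ}
    (hM : Tendsto (fun T : ℝ => (T ^ n)⁻¹ * ∫ x in Set.Icc 0 (fun _ => T), u x) atTop (𝓝 M)) :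
    a / (2 * R) ^ n ≤ M := by
  have hseq : Tendsto (fun m : ℕ => ((2 * R * m) ^ n)⁻¹ *
      ∫ x in Set.Icc 0 (fun _ => 2 * R * m), u x) atTop (𝓝 M) :=
    hM.comp (tendsto_natCast_atTop_atTop.const_mul_atTop (by positivity))
  refine ge_of_tendsto hseq ((eventually_ge_atTop 1).mono fun m hm => ?_)
  have hm : (0 : ℝ) < m := by exact_mod_cast hm
  calc a / (2 * R) ^ n = ((2 * R * m) ^ n)⁻¹ * ((m : ℝ) ^ n * a) := by
        field_simp
        ring
    _ ≤ _ := mul_le_mul_of_nonneg_left (natCast_pow_mul_le_setIntegral_Icc hu0 hu hR h m)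
        (by positivity)

lemma exists_forall_le_setIntegral_ball (hu0 : 0 ≤ u) (hu : Continuous u)
    (hper : RelativelyDenseAlmostPeriods u) {s₀ : Fin n → ℝ} (hs₀ : 0 < u s₀) :
    ∃ R > 0, ∃ a > 0, ∀ t, a ≤ ∫ x in ball t R, u x := by
  obtain ⟨r, hr, hnear⟩ := Metric.eventually_nhds_iff_ball.1
    (hu.continuousAt.eventually (lt_mem_nhds (half_lt_self hs₀)))
  obtain ⟨L, hL⟩ := hper (u s₀ / 4) (by positivity)
  have hL0 : 0 ≤ L := by
    obtain ⟨τ, hτ, -⟩ := hL 0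
    exact (norm_nonneg _).trans hτ
  refine ⟨L + r, by positivity, u s₀ / 4 * (2 * r) ^ n, by positivity, fun t => ?_⟩
  obtain ⟨τ, htτ, hτ⟩ := hL (t - s₀)
  have hsub : ball (s₀ + τ) r ⊆ ball t (L + r) := by
    have hdist : dist (s₀ + τ) t ≤ L := by rwa [dist_comm, dist_eq_norm, ← sub_sub]
    exact ball_subset_ball' (by linarith)
  have hlow : ∀ x ∈ ball (s₀ + τ) r, u s₀ / 4 ≤ u x := by
    intro x hx
    have hx' : u s₀ / 2 < u (x - τ) := hnear _ <| by
      rwa [mem_ball, dist_eq_norm, sub_sub, add_comm τ, ← dist_eq_norm]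
    have hτx := hτ (x - τ)
    rw [sub_add_cancel, Real.norm_eq_abs] at hτx
    linarith [neg_abs_le (u x - u (x - τ))]
  calc u s₀ / 4 * (2 * r) ^ n ≤ ∫ x in ball (s₀ + τ) r, u x :=
        mul_pow_le_setIntegral_ball hu.locallyIntegrable hr hlow
    _ ≤ ∫ x in ball t (L + r), u x :=
        setIntegral_mono_set (hu.locallyIntegrable.integrableOn_ball _ _)
          (Eventually.of_forall hu0) hsub.eventuallyLE

end MeanValue

lemma hasMeanValue_ofReal_iff {n : ℕ} {u : (Fin n → ℝ) → ℝ} {M : ℝ} :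
    HasMeanValue (fun s => (u s : ℂ)) M ↔
      Tendsto (fun T : ℝ => (T ^ n)⁻¹ * ∫ x in Set.Icc 0 (fun _ => T), u x) atTop (𝓝 M) := by
  rw [HasMeanValue, ← tendsto_ofReal_iff]
  simp only [integral_complex_ofReal, Complex.ofReal_mul, Complex.ofReal_inv, Complex.ofReal_pow]

theorem stmt5_general {n : ℕ} (w : (Fin n → ℝ) → ℂ)
    (hap : AlmostPeriodic w)
    (hnn : ∀ s, (w s).im = 0 ∧ 0 ≤ (w s).re)
    (hM : HasMeanValue w 0) :
    ∀ s, w s = 0 := by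
  set u : (Fin n → ℝ) → ℝ := fun s => (w s).re
  have hwu : w = fun s => (u s : ℂ) := funext fun s => Complex.ext rfl (hnn s).1
  have hu0 : 0 ≤ u := fun s => (hnn s).2
  have hu : Continuous u := Complex.continuous_re.comp hap.continuous
  intro s₀
  by_contra hs₀
  have hpos : 0 < u s₀ := (hu0 s₀).lt_of_ne fun h => hs₀ (by simp [hwu, ← h])
  obtain ⟨R, hR, a, ha, hball⟩ := exists_forall_le_setIntegral_ball hu0 hu
    hap.relativelyDenseAlmostPeriods.re hpos
  rw [hwu, ← Complex.ofReal_zero, hasMeanValue_ofReal_iff] at hM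
  have := div_pow_le_of_tendsto_mean hu0 hu.locallyIntegrable hR hball hM
  have : 0 < a / (2 * R) ^ n := by positivity
  linarith

/-- Bohr's theorem: an almost periodic function `w : ℝⁿ → ℂ` with values in `ℝ^{≥0}`
and mean value `0` vanishes identically. -/
theorem stmt5 {n : ℕ} (hn : 1 ≤ n) (w : (Fin n → ℝ) → ℂ)
    (hap : AlmostPeriodic w)
    (hnn : ∀ s, (w s).im = 0 ∧ 0 ≤ (w s).re)
    (hM : HasMeanValue w 0) :
    ∀ s, w s = 0 :=
  stmt5_general w hap hnn hM
end

section
/- Suppose w : ℝⁿ → ℂ is almost periodic with w(ℝⁿ) ⊆ ℝ^{≥0}, and f : ℝ → ℝⁿ is measurable and uniformly distributed, meaning lim_{T→∞} (1/T) ∫₀^T e^{2πi(β·f(t))} dt = 0 for all nonzero β ∈ ℝⁿ. Then limsup_{t→+∞} w(f(t)) = 0 if and only if w = 0 identically. -/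
/-!
If `w s₀ ≠ 0`, then `Re w s₀ > 0`. Continuity and Bohr's relatively dense almost periods give,
within a fixed distance of every point, a ball of fixed radius on which `Re w ≥ Re w s₀ / 2`;
counting these balls shows that the averages of `w` over large cubes stay above some `κ > 0`.
The normalized Lebesgue measures on the cubes and the laws of `f` on `(0, T]` are both
equidistributed in Weyl's sense, so approximating `w` uniformly by trigonometric polynomials shows
that the two kinds of averages of `w` are asymptotically equal. But `limsup Re w (f t) = 0` forces
the averages along `f` eventually below `κ / 2`.
-/

open MeasureTheory Filter

/-- A bounded measurable `g : ℝ → ℂ` has *mean value* `M` if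
`T⁻¹ ∫_0^T g(t) dt → M` as `T → ∞`. -/
def HasMeanValue1 (g : ℝ → ℂ) (M : ℂ) : Prop :=
  Tendsto (fun T : ℝ => (T : ℂ)⁻¹ * ∫ t in Set.Ioc (0 : ℝ) T, g t) atTop (nhds M)

open Complex Function Metric ProbabilityTheory Topology

section

variable {ι : Type*} [Fintype ι]

noncomputable def chr (α s : ι → ℝ) : ℂ := exp (I * (α ⬝ᵥ s : ℝ))

@[simp]
lemma norm_chr (α s : ι → ℝ) : ‖chr α s‖ = 1 := by
  simp [chr, norm_exp]

@[simp]
lemma chr_zero_left (s : ι → ℝ) : chr 0 s = 1 := by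
  simp [chr]

lemma chr_add_right (α s t : ι → ℝ) : chr α (s + t) = chr α s * chr α t := by
  simp only [chr, dotProduct_add, ofReal_add, mul_add, exp_add]

lemma chr_eq_prod (α s : ι → ℝ) : chr α s = ∏ i, exp (I * (α i * s i : ℝ)) := by
  simp only [chr, dotProduct, ofReal_sum, Finset.mul_sum, exp_sum]

@[fun_prop]
lemma continuous_chr (α : ι → ℝ) : Continuous (chr α) := by
  unfold chr dotProduct; fun_prop

lemma norm_chr_sub_one (α s t : ι → ℝ) : ‖chr α (s - t) - 1‖ = ‖chr α s - chr α t‖ := by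
  conv_rhs => rw [← sub_add_cancel s t, chr_add_right, ← sub_one_mul, norm_mul, norm_chr, mul_one]

section RelativelyDense

variable {X : Type*} [PseudoMetricSpace X]

def IsRelativelyDense (S : Set X) : Prop := ∃ R, ∀ x, ∃ τ ∈ S, dist τ x ≤ R

lemma IsRelativelyDense.mono {S S' : Set X} (h : IsRelativelyDense S) (hS : S ⊆ S') :
    IsRelativelyDense S' :=
  let ⟨R, hR⟩ := h
  ⟨R, fun x => let ⟨τ, hτ, hd⟩ := hR x; ⟨τ, hS hτ, hd⟩⟩

end RelativelyDense

lemma isRelativelyDense_setOf_norm_chr_sub_one_le (A : Finset (ι → ℝ)) {η : ℝ} (hη : 0 < η) :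
    IsRelativelyDense {τ : ι → ℝ | ∀ α ∈ A, ‖chr α τ - 1‖ ≤ η} := by
  set φ : (ι → ℝ) → (A → ℂ) := fun s α => chr α s
  have hφ : φ '' Set.univ ⊆ closedBall 0 1 := by
    rintro _ ⟨s, -, rfl⟩
    rw [mem_closedBall, dist_zero_right]
    exact (pi_norm_le_iff_of_nonneg zero_le_one).2 fun α => (norm_chr α.1 s).le
  -- The characters in `A` jointly take values in a compact torus, which a finite set of values
  -- `φ u` approximates; `x - t` is then an almost period near `x` for a suitable `t ∈ u`.
  obtain ⟨u, -, hu, hcover⟩ := Set.exists_subset_image_finite_and.1 <|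
    finite_approx_of_totallyBounded ((isCompact_closedBall _ _).totallyBounded.subset hφ) η hη
  obtain ⟨R, hR⟩ := isBounded_iff_forall_norm_le.1 hu.isBounded
  refine ⟨R, fun x => ?_⟩
  obtain ⟨_, ⟨t, ht, rfl⟩, hxt⟩ := Set.mem_iUnion₂.1 (hcover ⟨x, trivial, rfl⟩)
  refine ⟨x - t, fun α hα => ?_, by simpa [dist_eq_norm] using hR t ht⟩
  rw [norm_chr_sub_one, ← dist_eq_norm]
  exact (dist_le_pi_dist (φ x) (φ t) ⟨α, hα⟩).trans (mem_ball.1 hxt).le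

def almostPeriods {X E : Type*} [AddGroup X] [SeminormedAddGroup E] (w : X → E) (ε : ℝ) :
    Set X :=
  {τ | ∀ s, ‖w (s + τ) - w s‖ ≤ ε}

variable {n : ℕ}

lemma isTrigPoly_iff {p : (Fin n → ℝ) → ℂ} :
    IsTrigPoly p ↔ ∃ (A : Finset (Fin n → ℝ)) (c : (Fin n → ℝ) → ℂ),
      p = fun s => ∑ α ∈ A, c α * chr α s :=
  exists₂_congr fun _ _ => funext_iff.symm

namespace IsTrigPoly

variable {p : (Fin n → ℝ) → ℂ}

lemma continuous_s7 (hp : IsTrigPoly p) : Continuous p := by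
  obtain ⟨A, c, rfl⟩ := isTrigPoly_iff.1 hp
  fun_prop

lemma exists_norm_le (hp : IsTrigPoly p) : ∃ C, ∀ s, ‖p s‖ ≤ C := by
  obtain ⟨A, c, rfl⟩ := isTrigPoly_iff.1 hp
  refine ⟨∑ α ∈ A, ‖c α‖, fun s => (norm_sum_le _ _).trans_eq ?_⟩
  simp

lemma isRelativelyDense_almostPeriods (hp : IsTrigPoly p) {ε : ℝ} (hε : 0 < ε) :
    IsRelativelyDense (almostPeriods p ε) := by
  obtain ⟨A, c, rfl⟩ := isTrigPoly_iff.1 hp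
  set C := ∑ α ∈ A, ‖c α‖
  have hC : 0 ≤ C := Finset.sum_nonneg fun _ _ => norm_nonneg _
  refine (isRelativelyDense_setOf_norm_chr_sub_one_le A (η := ε / (C + 1)) (by positivity)).mono
    fun τ hτ s => ?_
  have hCε : C * (ε / (C + 1)) ≤ ε := by
    rw [mul_div_left_comm]
    exact mul_le_of_le_one_right hε.le ((div_le_one (by positivity)).2 (by linarith))
  calc ‖∑ α ∈ A, c α * chr α (s + τ) - ∑ α ∈ A, c α * chr α s‖
      = ‖∑ α ∈ A, c α * chr α s * (chr α τ - 1)‖ := by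
        simp only [← Finset.sum_sub_distrib, chr_add_right]; congr 1
        exact Finset.sum_congr rfl fun _ _ => by ring
    _ ≤ ∑ α ∈ A, ‖c α‖ * (ε / (C + 1)) := by
        refine (norm_sum_le _ _).trans (Finset.sum_le_sum fun α hα => ?_)
        simpa using mul_le_mul_of_nonneg_left (hτ α hα) (norm_nonneg (c α))
    _ ≤ ε := by rw [← Finset.sum_mul]; exact hCε

lemma almostPeriodic (hp : IsTrigPoly p) : AlmostPeriodic p :=
  fun _ hε => ⟨p, hp, fun s => by simpa using hε.le⟩

end IsTrigPoly

namespace AlmostPeriodic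

variable {w : (Fin n → ℝ) → ℂ}

lemma continuous_s7 (hw : AlmostPeriodic w) : Continuous w := by
  refine continuous_of_uniform_approx_of_continuous fun u hu => ?_
  obtain ⟨ε, hε, hεu⟩ := mem_uniformity_dist.1 hu
  obtain ⟨p, hp, hwp⟩ := hw (ε / 2) (half_pos hε)
  exact ⟨p, hp.continuous_s7, fun s => hεu <| by rw [dist_eq_norm]; linarith [hwp s]⟩

lemma exists_norm_le (hw : AlmostPeriodic w) : ∃ C, ∀ s, ‖w s‖ ≤ C := by
  obtain ⟨p, hp, hwp⟩ := hw 1 one_pos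
  obtain ⟨C, hC⟩ := hp.exists_norm_le
  exact ⟨C + 1, fun s => by linarith [norm_le_norm_add_norm_sub' (w s) (p s), hwp s, hC s]⟩

lemma isRelativelyDense_almostPeriods (hw : AlmostPeriodic w) {ε : ℝ} (hε : 0 < ε) :
    IsRelativelyDense (almostPeriods w ε) := by
  obtain ⟨p, hp, hwp⟩ := hw (ε / 3) (by positivity)
  refine (hp.isRelativelyDense_almostPeriods (ε := ε / 3) (by positivity)).mono fun τ hτ s => ?_
  simp only [← dist_eq_norm] at hwp ⊢
  calc dist (w (s + τ)) (w s)
      ≤ dist (w (s + τ)) (p (s + τ)) + dist (p (s + τ)) (p s) + dist (p s) (w s) :=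
        dist_triangle4 _ _ _ _
    _ ≤ ε / 3 + ε / 3 + ε / 3 := by
        gcongr
        exacts [hwp _, (dist_eq_norm _ _).trans_le (hτ s), dist_comm (p s) (w s) ▸ hwp s]
    _ = ε := by ring

/-- Translate a small ball around `s₀`, given by continuity, by an almost period. -/
lemma exists_forall_ball_norm_sub_le (hw : AlmostPeriodic w) (s₀ : Fin n → ℝ) {ε : ℝ}
    (hε : 0 < ε) :
    ∃ R, ∃ δ > 0, ∀ x, ∃ z, dist z x ≤ R ∧ ∀ y ∈ ball z δ, ‖w y - w s₀‖ ≤ ε := by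
  obtain ⟨δ, hδ, hcont⟩ := Metric.continuous_iff.1 hw.continuous_s7 s₀ (ε / 2) (half_pos hε)
  obtain ⟨R, hR⟩ := hw.isRelativelyDense_almostPeriods (half_pos hε)
  refine ⟨R, δ, hδ, fun x => ?_⟩
  obtain ⟨τ, hτ, hτx⟩ := hR (x - s₀)
  refine ⟨s₀ + τ, ?_, fun y hy => ?_⟩
  · rwa [← add_sub_cancel s₀ x, dist_add_left]
  have hys : dist (y - τ) s₀ < δ := (dist_sub_eq_dist_add_left y τ s₀).trans_lt hy
  calc ‖w y - w s₀‖ ≤ ‖w (y - τ + τ) - w (y - τ)‖ + ‖w (y - τ) - w s₀‖ := by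
        rw [sub_add_cancel]; exact norm_sub_le_norm_sub_add_norm_sub _ _ _
    _ ≤ ε / 2 + ε / 2 := add_le_add (hτ _) (dist_eq_norm (w _) _ ▸ (hcont _ hys).le)
    _ = ε := add_halves ε

end AlmostPeriodic

/-- Weyl's criterion for convergence to Haar measure on the Bohr compactification of `ι → ℝ`. -/
structure Equidistributed {J : Type*} (l : Filter J) (ν : J → Measure (ι → ℝ)) : Prop where
  eventually_isProbabilityMeasure : ∀ᶠ i in l, IsProbabilityMeasure (ν i)
  tendsto_integral_chr : ∀ α ≠ 0, Tendsto (fun i => ∫ s, chr α s ∂ν i) l (𝓝 0)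

namespace Equidistributed

variable {J : Type*} {l : Filter J} {ν ν' : J → Measure (ι → ℝ)}

lemma tendsto_integral_chr_sub (hν : Equidistributed l ν) (hν' : Equidistributed l ν')
    (α : ι → ℝ) : Tendsto (fun i => ∫ s, chr α s ∂ν i - ∫ s, chr α s ∂ν' i) l (𝓝 0) := by
  rcases eq_or_ne α 0 with rfl | hα
  · refine tendsto_const_nhds.congr' ?_
    filter_upwards [hν.eventually_isProbabilityMeasure, hν'.eventually_isProbabilityMeasure]
      with i _ _
    simp
  · simpa using (hν.tendsto_integral_chr α hα).sub (hν'.tendsto_integral_chr α hα)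

end Equidistributed

lemma IsTrigPoly.tendsto_integral_sub {p : (Fin n → ℝ) → ℂ} (hp : IsTrigPoly p)
    {J : Type*} {l : Filter J} {ν ν' : J → Measure (Fin n → ℝ)} (hν : Equidistributed l ν)
    (hν' : Equidistributed l ν') :
    Tendsto (fun i => ∫ s, p s ∂ν i - ∫ s, p s ∂ν' i) l (𝓝 0) := by
  obtain ⟨A, c, rfl⟩ := isTrigPoly_iff.1 hp
  have hlim := tendsto_finsetSum A fun α _ => (hν.tendsto_integral_chr_sub hν' α).const_mul (c α)
  simp only [mul_zero, Finset.sum_const_zero] at hlim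
  refine hlim.congr' ?_
  filter_upwards [hν.eventually_isProbabilityMeasure, hν'.eventually_isProbabilityMeasure]
    with i _ _
  have hint (μ : Measure (Fin n → ℝ)) [IsFiniteMeasure μ] (α : Fin n → ℝ) :
      Integrable (fun s => c α * chr α s) μ :=
    Integrable.of_bound (by fun_prop) ‖c α‖ (ae_of_all _ fun s => by simp)
  simp only [integral_finsetSum _ fun α _ => hint _ α, integral_const_mul, mul_sub,
    Finset.sum_sub_distrib]

lemma AlmostPeriodic.integrable {w : (Fin n → ℝ) → ℂ} (hw : AlmostPeriodic w)
    (μ : Measure (Fin n → ℝ)) [IsFiniteMeasure μ] : Integrable w μ :=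
  let ⟨C, hC⟩ := hw.exists_norm_le
  Integrable.of_bound hw.continuous_s7.aestronglyMeasurable C (ae_of_all _ hC)

lemma AlmostPeriodic.tendsto_integral_sub {w : (Fin n → ℝ) → ℂ}
    (hw : AlmostPeriodic w) {J : Type*} {l : Filter J} {ν ν' : J → Measure (Fin n → ℝ)}
    (hν : Equidistributed l ν) (hν' : Equidistributed l ν') :
    Tendsto (fun i => ∫ s, w s ∂ν i - ∫ s, w s ∂ν' i) l (𝓝 0) := by
  refine Metric.tendsto_nhds.2 fun ε hε => ?_
  obtain ⟨p, hp, hwp⟩ := hw (ε / 4) (by positivity)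
  have happrox (μ : Measure (Fin n → ℝ)) [IsProbabilityMeasure μ] :
      ‖∫ s, w s ∂μ - ∫ s, p s ∂μ‖ ≤ ε / 4 := by
    rw [← integral_sub (hw.integrable μ) (hp.almostPeriodic.integrable μ)]
    simpa using norm_integral_le_of_norm_le_const (μ := μ) (ae_of_all _ hwp)
  filter_upwards [Metric.tendsto_nhds.1 (hp.tendsto_integral_sub hν hν') (ε / 4) (by positivity),
    hν.eventually_isProbabilityMeasure, hν'.eventually_isProbabilityMeasure] with i hi _ _
  rw [dist_zero_right] at hi ⊢
  have h₁ := happrox (ν i)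
  have h₂ := happrox (ν' i)
  calc ‖∫ s, w s ∂ν i - ∫ s, w s ∂ν' i‖
      = ‖(∫ s, w s ∂ν i - ∫ s, p s ∂ν i) - (∫ s, w s ∂ν' i - ∫ s, p s ∂ν' i)
          + (∫ s, p s ∂ν i - ∫ s, p s ∂ν' i)‖ := by congr 1; ring
    _ ≤ ε / 4 + ε / 4 + ‖∫ s, p s ∂ν i - ∫ s, p s ∂ν' i‖ :=
        (norm_add_le _ _).trans (add_le_add_left ((norm_sub_le _ _).trans (add_le_add h₁ h₂)) _)
    _ < ε := by linarith

lemma integral_cond {X E : Type*} [MeasurableSpace X] [NormedAddCommGroup E] [NormedSpace ℝ E]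
    (μ : Measure X) (s : Set X) (g : X → E) :
    ∫ x, g x ∂μ[|s] = (μ.real s)⁻¹ • ∫ x in s, g x ∂μ := by
  rw [ProbabilityTheory.cond, integral_smul_measure, ENNReal.toReal_inv, measureReal_def]

lemma integral_cond_pi_prod {𝕜 : Type*} [RCLike 𝕜] {X : ι → Type*}
    [∀ i, MeasurableSpace (X i)] (μ : ∀ i, Measure (X i)) [∀ i, SigmaFinite (μ i)]
    (s : ∀ i, Set (X i)) (g : ∀ i, X i → 𝕜) :
    ∫ x, ∏ i, g i (x i) ∂(Measure.pi μ)[|Set.univ.pi s] = ∏ i, ∫ x, g i x ∂(μ i)[|s i] := by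
  simp only [integral_cond, Measure.restrict_pi_pi, integral_fintype_prod_eq_prod, measureReal_def,
    Measure.pi_pi, ENNReal.toReal_prod, ← Finset.prod_inv_distrib, RCLike.real_smul_eq_coe_mul,
    Finset.prod_mul_distrib, RCLike.ofReal_prod]

def cube (T : ℝ) : Set (ι → ℝ) := Set.univ.pi fun _ => Set.Ioc 0 T

lemma measurableSet_cube (T : ℝ) : MeasurableSet (cube (ι := ι) T) :=
  MeasurableSet.univ_pi fun _ => measurableSet_Ioc

lemma volume_cube (T : ℝ) : volume (cube (ι := ι) T) = ENNReal.ofReal T ^ Fintype.card ι := by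
  simp [cube, volume_pi_pi, Real.volume_Ioc, Finset.prod_const]

lemma isProbabilityMeasure_cond_cube {T : ℝ} (hT : 0 < T) :
    IsProbabilityMeasure (volume[|cube (ι := ι) T]) :=
  cond_isProbabilityMeasure_of_finite (by simp [volume_cube, hT])
    (by simp [volume_cube])

lemma isProbabilityMeasure_cond_Ioc {T : ℝ} (hT : 0 < T) :
    IsProbabilityMeasure (volume[|Set.Ioc (0 : ℝ) T]) :=
  cond_isProbabilityMeasure_of_finite (by simp [hT]) (by simp)

lemma tendsto_integral_exp_cond_Ioc {a : ℝ} (ha : a ≠ 0) :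
    Tendsto (fun T => ∫ u, exp (I * (a * u : ℝ)) ∂volume[|Set.Ioc (0 : ℝ) T]) atTop (𝓝 0) := by
  have hbound : ∀ T > 0, ‖∫ u, exp (I * (a * u : ℝ)) ∂volume[|Set.Ioc (0 : ℝ) T]‖
      ≤ 2 / |a| * T⁻¹ := by
    intro T hT
    have hexp : (fun u : ℝ => exp (I * (a * u : ℝ))) = fun u : ℝ => exp (a * I * u) := by
      ext u; push_cast; ring_nf
    rw [integral_cond, hexp, Real.volume_real_Ioc_of_le hT.le, sub_zero,
      ← intervalIntegral.integral_of_le hT.le, integral_exp_mul_complex (by simpa using ha),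
      norm_smul, norm_inv, Real.norm_of_nonneg hT.le, mul_comm, norm_div]
    gcongr
    · rw [ofReal_zero, mul_zero, exp_zero]
      calc ‖exp (a * I * T) - 1‖ ≤ ‖exp (↑(a * T) * I)‖ + ‖(1 : ℂ)‖ := by
            rw [ofReal_mul, mul_right_comm]; exact norm_sub_le _ _
        _ = 2 := by rw [norm_exp_ofReal_mul_I, norm_one]; norm_num
    · simp
  refine squeeze_zero_norm' (eventually_gt_atTop 0 |>.mono hbound) ?_
  simpa using tendsto_inv_atTop_zero.const_mul (2 / |a|)

lemma equidistributed_cond_cube : Equidistributed atTop fun T => volume[|cube (ι := ι) T] where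
  eventually_isProbabilityMeasure :=
    eventually_gt_atTop 0 |>.mono fun _ hT => isProbabilityMeasure_cond_cube hT
  tendsto_integral_chr α hα := by
    classical
    -- The integral factorizes over the coordinates: the factor at a coordinate `i` with
    -- `α i ≠ 0` tends to `0`, and all factors have norm at most `1`.
    obtain ⟨i, hi⟩ := Function.ne_iff.1 hα
    refine squeeze_zero_norm' ?_
      (by simpa only [norm_zero] using (tendsto_integral_exp_cond_Ioc hi).norm)
    filter_upwards [eventually_gt_atTop 0] with T hT
    have := isProbabilityMeasure_cond_Ioc hT
    have hle (j : ι) : ‖∫ u, exp (I * (α j * u : ℝ)) ∂volume[|Set.Ioc (0 : ℝ) T]‖ ≤ 1 := by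
      simpa using norm_integral_le_of_norm_le_const (μ := volume[|Set.Ioc (0 : ℝ) T])
        (ae_of_all _ fun u => (norm_exp_I_mul_ofReal (α j * u)).le)
    have hprod := integral_cond_pi_prod (fun _ => volume) (fun _ => Set.Ioc (0 : ℝ) T)
      fun j u => exp (I * (α j * u : ℝ))
    simp only [chr_eq_prod, cube, volume_pi, hprod, norm_prod]
    rw [← Finset.mul_prod_erase _ _ (Finset.mem_univ i)]
    exact mul_le_of_le_one_right (norm_nonneg _)
      (Finset.prod_le_one (fun _ _ => norm_nonneg _) fun j _ => hle j)

lemma equidistributed_map_cond_Ioc {f : ℝ → ι → ℝ} (hf : Measurable f)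
    (hud : ∀ β : ι → ℝ, β ≠ 0 →
      HasMeanValue1 (fun t => exp (2 * (Real.pi : ℂ) * I * (↑(∑ i, β i * f t i) : ℂ))) 0) :
    Equidistributed atTop fun T => (volume[|Set.Ioc (0 : ℝ) T]).map f where
  eventually_isProbabilityMeasure := eventually_gt_atTop 0 |>.mono fun _ hT =>
    have := isProbabilityMeasure_cond_Ioc hT
    Measure.isProbabilityMeasure_map hf.aemeasurable
  tendsto_integral_chr α hα := by
    have hβ : (2 * Real.pi)⁻¹ • α ≠ 0 := smul_ne_zero (by positivity) hα
    refine (hud _ hβ).congr' ?_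
    filter_upwards [eventually_gt_atTop 0] with T hT
    rw [integral_map hf.aemeasurable (continuous_chr α).aestronglyMeasurable, integral_cond,
      Real.volume_real_Ioc_of_le hT.le, sub_zero, Complex.real_smul, ofReal_inv]
    congr 2 with t
    change exp (2 * Real.pi * I * (((2 * Real.pi)⁻¹ • α) ⬝ᵥ f t : ℝ)) = exp (I * (α ⬝ᵥ f t : ℝ))
    rw [smul_dotProduct, smul_eq_mul]
    push_cast
    field_simp

/-- Each of the `m ^ card ι` subcubes of side `2 (R + δ)` contains a `δ`-ball in `S` centred near
its centre, and these balls are disjoint. -/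
lemma le_volume_cube_inter {S : Set (ι → ℝ)} {R δ : ℝ} (hδ : 0 < δ)
    (hS : ∀ x, ∃ z, dist z x ≤ R ∧ ball z δ ⊆ S) (m : ℕ) :
    ENNReal.ofReal ((m * (2 * δ)) ^ Fintype.card ι) ≤ volume (cube (m * (2 * (R + δ))) ∩ S) := by
  classical
  set L := 2 * (R + δ)
  have hR : 0 ≤ R := let ⟨z, hz, _⟩ := hS 0; dist_nonneg.trans hz
  have hL : 0 < L := by positivity
  choose z hz hzS using fun k : ι → Fin m => hS fun i => k i * L + L / 2
  have hmem (k : ι → Fin m) (y) (hy : y ∈ ball (z k) δ) (i : ι) :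
      (k i : ℝ) * L < y i ∧ y i < k i * L + L := by
    have h₁ := (dist_le_pi_dist _ _ i).trans (hz k)
    have h₂ := (dist_le_pi_dist _ _ i).trans_lt (mem_ball.1 hy)
    rw [Real.dist_eq, abs_le] at h₁
    rw [Real.dist_eq, abs_lt] at h₂
    constructor <;> linarith [h₁.1, h₁.2, h₂.1, h₂.2]
  -- `k` can be read off any point of its ball, so the balls are disjoint.
  have hfloor (k : ι → Fin m) (y) (hy : y ∈ ball (z k) δ) (i : ι) : ⌊y i / L⌋₊ = k i := by
    obtain ⟨h₁, h₂⟩ := hmem k y hy i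
    have hy : 0 ≤ y i := (mul_nonneg (Nat.cast_nonneg _) hL.le).trans h₁.le
    rw [Nat.floor_eq_iff (div_nonneg hy hL.le), le_div_iff₀ hL, div_lt_iff₀ hL]
    constructor <;> linarith
  have hdisj : Pairwise (Disjoint on fun k => ball (z k) δ) := fun k k' hkk' =>
    Set.disjoint_left.2 fun y hy hy' => hkk' <| funext fun i => Fin.ext <| by
      rw [← hfloor k y hy i, hfloor k' y hy' i]
  have hsub : (⋃ k, ball (z k) δ) ⊆ cube (m * L) ∩ S := by
    refine Set.iUnion_subset fun k y hy => ⟨fun i _ => ?_, hzS k hy⟩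
    obtain ⟨h₁, h₂⟩ := hmem k y hy i
    have hk : (k i : ℝ) + 1 ≤ m := by exact_mod_cast (k i).isLt
    constructor <;> nlinarith
  calc ENNReal.ofReal ((m * (2 * δ)) ^ Fintype.card ι)
      = ∑ k : ι → Fin m, volume (ball (z k) δ) := by
        simp [Real.volume_pi_ball _ hδ, mul_pow, ENNReal.ofReal_mul, Fintype.card_pi]
    _ = volume (⋃ k, ball (z k) δ) := by
        rw [measure_iUnion hdisj fun _ => measurableSet_ball, tsum_fintype]
    _ ≤ volume (cube (m * L) ∩ S) := measure_mono hsub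

lemma le_measureReal_cond_cube {S : Set (ι → ℝ)} {R δ : ℝ} (hδ : 0 < δ)
    (hS : ∀ x, ∃ z, dist z x ≤ R ∧ ball z δ ⊆ S) {m : ℕ} (hm : 0 < m) :
    (δ / (R + δ)) ^ Fintype.card ι ≤ volume[|cube (ι := ι) (m * (2 * (R + δ)))].real S := by
  have hR : 0 ≤ R := let ⟨z, hz, _⟩ := hS 0; dist_nonneg.trans hz
  set T := (m : ℝ) * (2 * (R + δ))
  have hT : 0 < T := by positivity
  have hfin : volume (cube (ι := ι) T ∩ S) ≠ ⊤ :=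
    measure_ne_top_of_subset Set.inter_subset_left (by simp [volume_cube])
  have hvol := (ENNReal.ofReal_le_iff_le_toReal hfin).1 (le_volume_cube_inter hδ hS m)
  rw [measureReal_def, cond_apply (measurableSet_cube T), ENNReal.toReal_mul, ENNReal.toReal_inv,
    volume_cube, ENNReal.toReal_pow, ENNReal.toReal_ofReal hT.le, ← div_eq_inv_mul,
    le_div_iff₀ (by positivity), ← mul_pow]
  refine le_of_eq_of_le ?_ hvol
  congr 1
  rw [div_mul_eq_mul_div, div_eq_iff (by positivity)]
  ring

/-- Bohr's theorem that a nonnegative almost periodic function with zero mean vanishes. -/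
lemma AlmostPeriodic.exists_pos_frequently_le_re_integral_cond_cube {n : ℕ}
    {w : (Fin n → ℝ) → ℂ} (hw : AlmostPeriodic w) (hnn : ∀ s, 0 ≤ (w s).re) {s₀ : Fin n → ℝ}
    (hs₀ : 0 < (w s₀).re) :
    ∃ κ > 0, ∃ᶠ T in atTop, κ ≤ (∫ s, w s ∂volume[|cube T]).re := by
  set c := (w s₀).re
  obtain ⟨R, δ, hδ, hball⟩ := hw.exists_forall_ball_norm_sub_le s₀ (half_pos hs₀)
  have hS (x : Fin n → ℝ) : ∃ z, dist z x ≤ R ∧ ball z δ ⊆ {y | c / 2 ≤ (w y).re} := by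
    obtain ⟨z, hzx, hz⟩ := hball x
    refine ⟨z, hzx, fun y hy => ?_⟩
    have := (abs_le.1 ((abs_re_le_norm _).trans (hz y hy))).1
    rw [sub_re] at this
    simp only [Set.mem_ofPred_eq]
    linarith
  have hR : 0 ≤ R := let ⟨z, hz, _⟩ := hS 0; dist_nonneg.trans hz
  refine ⟨c / 2 * (δ / (R + δ)) ^ n, by positivity, ?_⟩
  refine (tendsto_natCast_atTop_atTop.atTop_mul_const (by positivity : 0 < 2 * (R + δ))).frequently
    (Eventually.frequently ?_)
  filter_upwards [eventually_gt_atTop 0] with m hm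
  have := isProbabilityMeasure_cond_cube (ι := Fin n) (T := m * (2 * (R + δ))) (by positivity)
  have hint : Integrable (fun s => (w s).re) volume[|cube (ι := Fin n) (m * (2 * (R + δ)))] :=
    (hw.integrable _).re
  rw [← RCLike.re_to_complex, ← integral_re (hw.integrable _)]
  calc c / 2 * (δ / (R + δ)) ^ n
      ≤ c / 2 * volume[|cube (ι := Fin n) (m * (2 * (R + δ)))].real {y | c / 2 ≤ (w y).re} := by
        have := le_measureReal_cond_cube hδ hS hm
        rw [Fintype.card_fin] at this
        gcongr
    _ ≤ _ := mul_meas_ge_le_integral_of_nonneg (ae_of_all _ hnn) hint _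

lemma integral_le_add_mul_measureReal {X : Type*} [MeasurableSpace X] {μ : Measure X}
    [IsProbabilityMeasure μ] {g : X → ℝ} (hg : Integrable g μ) {S : Set X} (hS : MeasurableSet S)
    {a C : ℝ} (hC : ∀ x, g x ≤ C) (ha : ∀ x ∉ S, g x ≤ a) :
    ∫ x, g x ∂μ ≤ a + (C - a) * μ.real S := by
  have hle : g ≤ fun x => a + S.indicator (fun _ => C - a) x := fun x => by
    by_cases hx : x ∈ S
    · simpa [hx] using hC x
    · simpa [hx] using ha x hx
  refine (integral_mono hg ((integrable_const a).add
    ((integrable_const (C - a)).indicator hS)) hle).trans_eq ?_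
  change ∫ x, (a + S.indicator (fun _ => C - a) x) ∂μ = _
  rw [integral_add (integrable_const a) ((integrable_const (C - a)).indicator hS),
    integral_indicator_const _ hS, integral_const, smul_eq_mul, smul_eq_mul, probReal_univ,
    one_mul, mul_comm]

lemma measureReal_cond_Ioc_Iio_le {T t₀ : ℝ} (hT : 0 < T) (ht₀ : 0 ≤ t₀) :
    volume[|Set.Ioc (0 : ℝ) T].real (Set.Iio t₀) ≤ t₀ * T⁻¹ := by
  rw [measureReal_def, cond_apply measurableSet_Ioc, ENNReal.toReal_mul, ENNReal.toReal_inv,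
    ← measureReal_def, ← measureReal_def, Real.volume_real_Ioc_of_le hT.le, sub_zero, mul_comm]
  gcongr
  calc volume.real (Set.Ioc 0 T ∩ Set.Iio t₀) ≤ volume.real (Set.Ioc 0 t₀) :=
        measureReal_mono (fun t ht => ⟨ht.1.1, ht.2.le⟩) measure_Ioc_lt_top.ne
    _ = t₀ := by rw [Real.volume_real_Ioc_of_le ht₀, sub_zero]

lemma eventually_integral_cond_Ioc_le {g : ℝ → ℝ} (hg : Measurable g) {C : ℝ}
    (hC : ∀ t, |g t| ≤ C) {a : ℝ} (ha : ∀ᶠ t in atTop, g t ≤ a) {ε : ℝ} (hε : 0 < ε) :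
    ∀ᶠ T in atTop, ∫ t, g t ∂volume[|Set.Ioc (0 : ℝ) T] ≤ a + ε := by
  obtain ⟨t₀, ht₀⟩ := eventually_atTop.1 ha
  set t₁ := max t₀ 0
  have hsmall : Tendsto (fun T : ℝ => |C - a| * (t₁ * T⁻¹)) atTop (𝓝 0) := by
    simpa using (tendsto_inv_atTop_zero.const_mul t₁).const_mul |C - a|
  filter_upwards [eventually_gt_atTop 0, hsmall.eventually (eventually_le_nhds hε)] with T hT hTε
  have := isProbabilityMeasure_cond_Ioc hT
  have hint : Integrable g volume[|Set.Ioc (0 : ℝ) T] :=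
    Integrable.of_bound hg.aestronglyMeasurable C (ae_of_all _ fun t => (hC t))
  calc ∫ t, g t ∂volume[|Set.Ioc (0 : ℝ) T]
      ≤ a + (C - a) * volume[|Set.Ioc (0 : ℝ) T].real (Set.Iio t₁) :=
        integral_le_add_mul_measureReal hint measurableSet_Iio
          (fun t => (le_abs_self _).trans (hC t)) fun t ht => ht₀ t (le_max_left _ _ |>.trans
            (not_lt.1 ht))
    _ ≤ a + |C - a| * (t₁ * T⁻¹) := by
        gcongr
        exacts [le_abs_self _, measureReal_cond_Ioc_Iio_le hT (le_max_right _ _)]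
    _ ≤ a + ε := by linarith

lemma AlmostPeriodic.eventually_re_integral_map_cond_Ioc_le {w : (Fin n → ℝ) → ℂ}
    (hw : AlmostPeriodic w) {f : ℝ → Fin n → ℝ} (hf : Measurable f) {a : ℝ}
    (ha : limsup (fun t => (w (f t)).re) atTop < a) {ε : ℝ} (hε : 0 < ε) :
    ∀ᶠ T in atTop, (∫ s, w s ∂(volume[|Set.Ioc (0 : ℝ) T]).map f).re ≤ a + ε := by
  obtain ⟨C, hC⟩ := hw.exists_norm_le
  have hre (t : ℝ) : |(w (f t)).re| ≤ C := (abs_re_le_norm _).trans (hC _)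
  have hla : ∀ᶠ t in atTop, (w (f t)).re ≤ a :=
    (eventually_lt_of_limsup_lt ha ⟨C, eventually_map.2 (.of_forall fun t =>
      (le_abs_self _).trans (hre t))⟩).mono fun _ => le_of_lt
  filter_upwards [eventually_gt_atTop 0, eventually_integral_cond_Ioc_le
    (g := fun t => (w (f t)).re) (Complex.measurable_re.comp (hw.continuous_s7.measurable.comp hf))
    hre hla hε] with T hT hle
  have := isProbabilityMeasure_cond_Ioc hT
  rw [integral_map hf.aemeasurable hw.continuous_s7.aestronglyMeasurable]
  exact (integral_re ((hw.integrable _).comp_measurable hf)).symm.trans_le hle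

end

theorem stmt7_general {n : ℕ} (w : (Fin n → ℝ) → ℂ)
    (hap : AlmostPeriodic w)
    (hnn : ∀ s, (w s).im = 0 ∧ 0 ≤ (w s).re)
    (f : ℝ → Fin n → ℝ) (hf : Measurable f)
    (hud : ∀ β : Fin n → ℝ, β ≠ 0 →
      HasMeanValue1
        (fun t => Complex.exp (2 * (↑Real.pi : ℂ) * Complex.I *
          (↑(∑ i, β i * f t i) : ℂ))) 0) :
    Filter.limsup (fun t => (w (f t)).re) Filter.atTop = 0 ↔ ∀ s, w s = 0 := by
  refine ⟨fun hls => ?_, fun h => by simp [h]⟩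
  by_contra! ⟨s₀, hs₀⟩
  have hpos : 0 < (w s₀).re := (hnn s₀).2.lt_of_ne fun h => hs₀ (Complex.ext h.symm (hnn s₀).1)
  obtain ⟨κ, hκ, hcube⟩ :=
    hap.exists_pos_frequently_le_re_integral_cond_cube (fun s => (hnn s).2) hpos
  have halong := hap.eventually_re_integral_map_cond_Ioc_le hf
    (hls.trans_lt (by positivity : (0 : ℝ) < κ / 4)) (by positivity : 0 < κ / 4)
  have hclose := (hap.tendsto_integral_sub equidistributed_cond_cube
    (equidistributed_map_cond_Ioc hf hud)).norm.eventually
    (eventually_lt_nhds (b := κ / 2) (by rw [norm_zero]; exact half_pos hκ))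
  obtain ⟨T, hT₁, hT₂, hT₃⟩ := (hcube.and_eventually (halong.and hclose)).exists
  have hdiff := (re_le_norm _).trans_lt hT₃
  rw [sub_re] at hdiff
  linarith

/-- If `w : ℝⁿ → ℂ` is almost periodic with values in `ℝ^{≥0}` and `f : ℝ → ℝⁿ` is
measurable and uniformly distributed, then `limsup_{t→∞} w(f(t)) = 0` iff `w = 0`. -/
theorem stmt7 {n : ℕ} (hn : 1 ≤ n) (w : (Fin n → ℝ) → ℂ)
    (hap : AlmostPeriodic w)
    (hnn : ∀ s, (w s).im = 0 ∧ 0 ≤ (w s).re)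
    (f : ℝ → Fin n → ℝ) (hf : Measurable f)
    (hud : ∀ β : Fin n → ℝ, β ≠ 0 →
      HasMeanValue1
        (fun t => Complex.exp (2 * (↑Real.pi : ℂ) * Complex.I *
          (↑(∑ i, β i * f t i) : ℂ))) 0) :
    Filter.limsup (fun t => (w (f t)).re) Filter.atTop = 0 ↔ ∀ s, w s = 0 :=
  stmt7_general w hap hnn f hf hud
end

section
/- Let a ∈ ℝ, r ∈ ℕ, and let τ : [a,∞) → ℂ be C^r with τ, τ', ..., τ^{(r)} all bounded on [a,∞) and τ nonvanishing. If f : [a,∞) → ℂ is C^r and for each k = 0,...,r the function f^{(k)}/τ^{r-k+1} is bounded on [a,∞), then (f/τ)^{(j)} is bounded on [a,∞) for j = 0,...,r. -/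
/-!
Write `g ∈ 𝒟(m, n)` when `g` is `C^n` on `s` and `g^{(k)} = O(τ^{m-k})` on `s` for `k ≤ n`, so that
`g ∈ 𝒟(m, n + 1)` iff `g = O(τ^m)` and `g' ∈ 𝒟(m - 1, n)`. When `τ` has bounded derivatives,
`𝒟(m, n)` is closed under sums and under multiplication by `𝒟(0, n)`, and division by a
nonvanishing `τ` maps `𝒟(m + 1, n)` to `𝒟(m, n)` for `n ≤ m`: by induction on `n`, since in
`(f/τ)' = f'/τ - ((f τ')/τ)/τ` each quotient is again covered by the induction hypothesis.
The hypothesis says `f ∈ 𝒟(r + 1, r)`; hence `f/τ ∈ 𝒟(r, r)`, which suffices as `τ` is bounded.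
-/

open Filter Asymptotics Set

theorem isBigO_principal_one_iff {α E F : Type*} [Norm E] [Norm F] [One F] [NormOneClass F]
    {f : α → E} {s : Set α} : f =O[𝓟 s] (fun _ => (1 : F)) ↔ ∃ C, ∀ x ∈ s, ‖f x‖ ≤ C := by
  simp only [isBigO_principal, norm_one, mul_one]

theorem isBigO_div_of_isBigO_pow_succ {α 𝕜 : Type*} [NormedField 𝕜] {f τ : α → 𝕜} {s : Set α}
    {m : ℕ} (hτ0 : ∀ t ∈ s, τ t ≠ 0) (hf : f =O[𝓟 s] fun t => τ t ^ (m + 1)) :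
    (fun t => f t / τ t) =O[𝓟 s] fun t => τ t ^ m := by
  refine ((hf.mul (isBigO_refl (fun t => (τ t)⁻¹) _)).congr_left fun t =>
    (div_eq_mul_inv _ _).symm).congr' EventuallyEq.rfl
    (eventually_principal.2 fun t ht => ?_)
  simp [pow_succ, mul_inv_cancel_right₀ (hτ0 t ht)]

/-- The exponent `m - k` truncates at `0`: derivatives of order `k ≥ m` are only required to be
bounded. -/
def DerivsIsBigOPow {𝕜 𝕜' : Type*} [NontriviallyNormedField 𝕜] [NontriviallyNormedField 𝕜']
    [NormedAlgebra 𝕜 𝕜'] (τ : 𝕜 → 𝕜') (s : Set 𝕜) (m n : ℕ) (g : 𝕜 → 𝕜') : Prop :=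
  ContDiffOn 𝕜 n g s ∧ ∀ k ≤ n, iteratedDerivWithin k g s =O[𝓟 s] fun t => τ t ^ (m - k)

namespace DerivsIsBigOPow

variable {𝕜 𝕜' : Type*} [NontriviallyNormedField 𝕜] [NontriviallyNormedField 𝕜']
  [NormedAlgebra 𝕜 𝕜'] {τ f g : 𝕜 → 𝕜'} {s : Set 𝕜} {m n : ℕ}

theorem zero_iff :
    DerivsIsBigOPow τ s m 0 g ↔ ContinuousOn g s ∧ g =O[𝓟 s] fun t => τ t ^ m := by
  simp [DerivsIsBigOPow, contDiffOn_zero]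

theorem succ_iff (hs : UniqueDiffOn 𝕜 s) :
    DerivsIsBigOPow τ s m (n + 1) g ↔ DifferentiableOn 𝕜 g s ∧
      (g =O[𝓟 s] fun t => τ t ^ m) ∧ DerivsIsBigOPow τ s (m - 1) n (derivWithin g s) := by
  simp only [DerivsIsBigOPow, Nat.cast_succ, contDiffOn_succ_iff_derivWithin hs]
  simp only [WithTop.natCast_ne_top, IsEmpty.forall_iff, true_and, Nat.sub_sub, and_assoc]
  refine and_congr_right fun _ => ?_
  rw [← and_assoc, and_comm (a := g =O[𝓟 s] _), and_assoc]
  refine and_congr_right fun _ => ?_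
  constructor
  · intro h
    refine ⟨by simpa using h 0 (Nat.zero_le _), fun k hk => ?_⟩
    simpa [iteratedDerivWithin_succ', add_comm 1 k] using h (k + 1) (by omega)
  · rintro ⟨h0, h⟩ (_ | k) hk
    · simpa using h0
    · simpa [iteratedDerivWithin_succ', add_comm 1 k] using h k (by omega)

theorem of_le_order {n' : ℕ} (hf : DerivsIsBigOPow τ s m n f) (hn : n' ≤ n) :
    DerivsIsBigOPow τ s m n' f :=
  ⟨hf.1.of_le (by exact_mod_cast hn), fun k hk => hf.2 k (hk.trans hn)⟩

theorem of_le_pow {m' : ℕ} (hτ : τ =O[𝓟 s] fun _ => (1 : 𝕜')) (hf : DerivsIsBigOPow τ s m n f)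
    (hm : m' ≤ m) : DerivsIsBigOPow τ s m' n f := by
  refine ⟨hf.1, fun k hk => (hf.2 k hk).trans ?_⟩
  have : (fun t => τ t ^ (m' - k) * τ t ^ (m - k - (m' - k))) =O[𝓟 s]
      fun t => τ t ^ (m' - k) * 1 ^ (m - k - (m' - k)) :=
    (isBigO_refl _ _).mul (hτ.pow _)
  simpa [← pow_add, Nat.add_sub_cancel' (Nat.sub_le_sub_right hm k)] using this

theorem congr (hf : DerivsIsBigOPow τ s m n f) (hfg : EqOn f g s) :
    DerivsIsBigOPow τ s m n g :=
  ⟨hf.1.congr hfg.symm, fun k hk => (hf.2 k hk).congr'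
    (eventually_principal.2 (iteratedDerivWithin_congr hfg)) EventuallyEq.rfl⟩

theorem add (hs : UniqueDiffOn 𝕜 s) (hf : DerivsIsBigOPow τ s m n f)
    (hg : DerivsIsBigOPow τ s m n g) : DerivsIsBigOPow τ s m n (f + g) := by
  refine ⟨hf.1.add hg.1, fun k hk => ?_⟩
  have hkn : (k : WithTop ℕ∞) ≤ n := by exact_mod_cast hk
  refine ((hf.2 k hk).add (hg.2 k hk)).congr' (eventually_principal.2 fun t ht => ?_)
    EventuallyEq.rfl
  exact (iteratedDerivWithin_add ht hs ((hf.1.of_le hkn) t ht) ((hg.1.of_le hkn) t ht)).symm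

theorem sub (hs : UniqueDiffOn 𝕜 s) (hf : DerivsIsBigOPow τ s m n f)
    (hg : DerivsIsBigOPow τ s m n g) : DerivsIsBigOPow τ s m n (f - g) := by
  refine ⟨hf.1.sub hg.1, fun k hk => ?_⟩
  have hkn : (k : WithTop ℕ∞) ≤ n := by exact_mod_cast hk
  refine ((hf.2 k hk).sub (hg.2 k hk)).congr' (eventually_principal.2 fun t ht => ?_)
    EventuallyEq.rfl
  exact (iteratedDerivWithin_sub ht hs ((hf.1.of_le hkn) t ht) ((hg.1.of_le hkn) t ht)).symm

theorem mul (hs : UniqueDiffOn 𝕜 s) (hτ : τ =O[𝓟 s] fun _ => (1 : 𝕜'))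
    (hf : DerivsIsBigOPow τ s m n f) (hg : DerivsIsBigOPow τ s 0 n g) :
    DerivsIsBigOPow τ s m n (f * g) := by
  induction n generalizing m f g with
  | zero =>
    rw [zero_iff] at *
    exact ⟨hf.1.mul hg.1, (hf.2.mul hg.2).congr_right fun t => by simp⟩
  | succ n ih =>
    obtain ⟨hfd, hfO, hf'⟩ := (succ_iff hs).1 hf
    obtain ⟨hgd, hgO, hg'⟩ := (succ_iff hs).1 hg
    have hderiv : EqOn (derivWithin f s * g + f * derivWithin g s) (derivWithin (f * g) s) s :=
      fun t ht => (derivWithin_mul (hfd t ht) (hgd t ht)).symm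
    refine (succ_iff hs).2 ⟨hfd.mul hgd, (hfO.mul hgO).congr_right fun t => by simp, ?_⟩
    exact ((ih hf' (hg.of_le_order n.le_succ)).add hs
      (ih ((hf.of_le_order n.le_succ).of_le_pow hτ (m.sub_le 1)) hg')).congr hderiv

theorem div (hs : UniqueDiffOn 𝕜 s) (hτ : DerivsIsBigOPow τ s 0 n τ) (hτ0 : ∀ t ∈ s, τ t ≠ 0)
    (hf : DerivsIsBigOPow τ s (m + 1) n f) (hn : n ≤ m) : DerivsIsBigOPow τ s m n (f / τ) := by
  induction n generalizing m f with
  | zero =>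
    rw [zero_iff] at *
    exact ⟨hf.1.div hτ.1 hτ0, isBigO_div_of_isBigO_pow_succ hτ0 hf.2⟩
  | succ n ih =>
    obtain ⟨m, rfl⟩ : ∃ m', m = m' + 1 := ⟨m - 1, by omega⟩
    obtain ⟨hfd, hfO, hf'⟩ := (succ_iff hs).1 hf
    obtain ⟨hτd, hτO, hτ'⟩ := (succ_iff hs).1 hτ
    have hτ1 : τ =O[𝓟 s] fun _ => (1 : 𝕜') := by simpa using hτO
    have hτn := hτ.of_le_order n.le_succ
    have hderiv : EqOn (derivWithin f s / τ - f * derivWithin τ s / τ / τ)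
        (derivWithin (f / τ) s) s := fun t ht => by
      rw [derivWithin_div (hfd t ht) (hτd t ht) (hτ0 t ht)]
      simp only [Pi.sub_apply, Pi.div_apply, Pi.mul_apply]
      field_simp [hτ0 t ht]
    have hfτ' := ih hτn ((hf.of_le_order n.le_succ).mul hs hτ1 hτ') (by omega)
    refine (succ_iff hs).2 ⟨hfd.div hτd hτ0, isBigO_div_of_isBigO_pow_succ hτ0 hfO, ?_⟩
    exact ((ih hτn hf' (by omega)).sub hs (ih hτn hfτ' (by omega))).congr hderiv

end DerivsIsBigOPow

/-- If `τ` is `C^r` on `[a,∞)` with `τ, τ', …, τ^{(r)}` bounded and `τ` nonvanishing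
there, and `f` is `C^r` on `[a,∞)` with `f^{(k)}/τ^{r−k+1}` bounded for `k = 0,…,r`,
then `(f/τ)^{(j)}` is bounded on `[a,∞)` for `j = 0,…,r`. -/
theorem stmt11 (a : ℝ) (r : ℕ) (τ f : ℝ → ℂ)
    (hτ : ContDiffOn ℝ r τ (Set.Ici a))
    (hτb : ∀ k ≤ r, ∃ C : ℝ, ∀ t ∈ Set.Ici a,
      ‖iteratedDerivWithin k τ (Set.Ici a) t‖ ≤ C)
    (hτ0 : ∀ t ∈ Set.Ici a, τ t ≠ 0)
    (hfc : ContDiffOn ℝ r f (Set.Ici a))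
    (hfb : ∀ k ≤ r, ∃ C : ℝ, ∀ t ∈ Set.Ici a,
      ‖iteratedDerivWithin k f (Set.Ici a) t / (τ t) ^ (r - k + 1)‖ ≤ C) :
    ∀ j ≤ r, ∃ C : ℝ, ∀ t ∈ Set.Ici a,
      ‖iteratedDerivWithin j (fun s => f s / τ s) (Set.Ici a) t‖ ≤ C := by
  have hτ' : DerivsIsBigOPow τ (Ici a) 0 r τ :=
    ⟨hτ, fun k hk => by simpa using isBigO_principal_one_iff (F := ℂ) |>.2 (hτb k hk)⟩
  have hf : DerivsIsBigOPow τ (Ici a) (r + 1) r f := by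
    refine ⟨hfc, fun k hk => ?_⟩
    rw [show r + 1 - k = r - k + 1 by omega, isBigO_iff_div_isBoundedUnder
      (eventually_principal.2 fun t ht h => absurd h (pow_ne_zero _ (hτ0 t ht)))]
    obtain ⟨C, hC⟩ := hfb k hk
    exact ⟨C, eventually_map.2 (eventually_principal.2 hC)⟩
  have hτ1 : τ =O[𝓟 (Ici a)] fun _ => (1 : ℂ) := by simpa using hτ'.2 0 (Nat.zero_le r)
  have hfτ := DerivsIsBigOPow.div (uniqueDiffOn_Ici a) hτ' hτ0 hf le_rfl
  intro j hj
  rw [← isBigO_principal_one_iff (F := ℂ)]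
  exact (hfτ.2 j hj).trans (by simpa using hτ1.pow (r - j))
end

section
/- Let a ∈ ℝ, ε > 0, and let φ : [a,∞) → ℂ be continuous with Re φ(t) ≥ ε for all t ≥ a, and Φ(t) = ∫_a^t φ(s) ds. Then for every bounded continuous f : [a,∞) → ℂ, the function e^{−Φ} f is integrable at ∞ (the improper integral ∫_a^∞ e^{−Φ(s)} f(s) ds converges), and (Bf)(t) := e^{Φ(t)} ∫_∞^t e^{−Φ(s)} f(s) ds defines a C¹ function satisfying (Bf)' − φ·(Bf) = f and sup_{t ≥ a} |Bf(t)| ≤ sup_{t ≥ a} |f(t)| · sup_{t ≥ a} |1/Re φ(t)|. -/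
/-!
For `a ≤ t ≤ s`, `Re φ ≥ δ > 0` gives `Re Φ(s) ≥ Re Φ(t) + δ (s - t)`, hence
`|e^{-Φ(s)} f(s)| ≤ C e^{-Re Φ(t)} e^{-δ (s - t)}`. This yields integrability at `∞` and, after
integrating over `(t, ∞)`, the bound `|Bf(t)| ≤ C / δ`; the claimed bound is the case
`δ = 1 / sup |1 / Re φ|`. On `[a, ∞)` one has `Bf = e^Φ (∫_a^t e^{-Φ} f - ∫_a^∞ e^{-Φ} f)`, so the
product rule and the fundamental theorem of calculus give `(Bf)' = φ Bf + f`.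
-/

open MeasureTheory Filter intervalIntegral

/-- Twisted integration operator (repulsive case):
`(Bf)(t) = e^{Φ(t)} ∫_∞^t e^{−Φ(s)} f(s) ds` where `Φ(t) = ∫_a^t φ(s) ds` and
`∫_∞^t = −∫_t^∞`. -/
noncomputable def twistIntR (a : ℝ) (φ f : ℝ → ℂ) : ℝ → ℂ := fun t =>
  Complex.exp (∫ s in a..t, φ s) *
    -(∫ s in Set.Ioi t, Complex.exp (-(∫ u in a..s, φ u)) * f s)

open Set

noncomputable def twistIntegrand (a : ℝ) (φ f : ℝ → ℂ) (s : ℝ) : ℂ :=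
  Complex.exp (-(∫ u in a..s, φ u)) * f s

section

variable {a δ C : ℝ} {φ f : ℝ → ℂ}

theorem hasDerivWithinAt_intervalIntegral_Ici (hφ : ContinuousOn φ (Ici a)) {t : ℝ}
    (ht : t ∈ Ici a) : HasDerivWithinAt (fun x => ∫ u in a..x, φ u) (φ t) (Ici a) t := by
  set ψ : ℝ → ℂ := fun x => φ (max a x)
  have hψ : Continuous ψ :=
    hφ.comp_continuous (continuous_const.max continuous_id) fun x => le_max_left a x
  have hψφ : EqOn ψ φ (Ici a) := fun x hx => by simp only [ψ, max_eq_right (mem_Ici.1 hx)]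
  have hprim : EqOn (fun x => ∫ u in a..x, ψ u) (fun x => ∫ u in a..x, φ u) (Ici a) :=
    fun x hx => integral_congr <| hψφ.mono <| by
      simpa [uIcc_of_le (mem_Ici.1 hx)] using Icc_subset_Ici_self
  rw [← hψφ ht]
  exact (hψ.integral_hasStrictDerivAt a t).hasDerivAt.hasDerivWithinAt.congr
    (fun x hx => (hprim hx).symm) (hprim ht).symm

theorem mul_sub_le_re_intervalIntegral {t s : ℝ} (hts : t ≤ s)
    (hφ : ContinuousOn φ (Icc t s)) (hδ : ∀ u ∈ Icc t s, δ ≤ (φ u).re) :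
    δ * (s - t) ≤ (∫ u in t..s, φ u).re := by
  calc δ * (s - t) = ∫ _ in t..s, δ := by simp [mul_comm]
    _ ≤ ∫ u in t..s, RCLike.re (φ u) := integral_mono_on hts intervalIntegrable_const
        ((Complex.continuous_re.comp_continuousOn hφ).intervalIntegrable_of_Icc hts) hδ
    _ = (∫ u in t..s, φ u).re := intervalIntegral_re (hφ.intervalIntegrable_of_Icc hts)

theorem re_intervalIntegral_add_mul_sub_le (hφc : ContinuousOn φ (Ici a))
    (hφ : ∀ u ∈ Ici a, δ ≤ (φ u).re) {t s : ℝ} (hat : a ≤ t) (hts : t ≤ s) :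
    (∫ u in a..t, φ u).re + δ * (s - t) ≤ (∫ u in a..s, φ u).re := by
  have hcont : ∀ {x y}, a ≤ x → ContinuousOn φ (Icc x y) := fun hax =>
    hφc.mono fun u hu => hax.trans hu.1
  rw [← integral_add_adjacent_intervals ((hcont le_rfl).intervalIntegrable_of_Icc hat)
    ((hcont hat).intervalIntegrable_of_Icc hts), Complex.add_re]
  gcongr
  exact mul_sub_le_re_intervalIntegral hts (hcont hat) fun u hu => hφ u (hat.trans hu.1)

theorem continuousOn_twistIntegrand (hφc : ContinuousOn φ (Ici a))
    (hfc : ContinuousOn f (Ici a)) : ContinuousOn (twistIntegrand a φ f) (Ici a) :=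
  have hΦ : ContinuousOn (fun x => ∫ u in a..x, φ u) (Ici a) := fun _ ht =>
    (hasDerivWithinAt_intervalIntegral_Ici hφc ht).continuousWithinAt
  hΦ.neg.cexp.mul hfc

theorem norm_twistIntegrand_le (hφc : ContinuousOn φ (Ici a)) (hφ : ∀ u ∈ Ici a, δ ≤ (φ u).re)
    (hf : ∀ s ∈ Ici a, ‖f s‖ ≤ C) {t s : ℝ} (hat : a ≤ t) (hts : t ≤ s) :
    ‖twistIntegrand a φ f s‖ ≤
      C * Real.exp (δ * t - (∫ u in a..t, φ u).re) * Real.exp (-δ * s) := by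
  have hgrowth := re_intervalIntegral_add_mul_sub_le hφc hφ hat hts
  have hfs := hf s (hat.trans hts)
  rw [twistIntegrand, norm_mul, Complex.norm_exp, Complex.neg_re, mul_assoc, ← Real.exp_add,
    mul_comm]
  gcongr
  · exact (norm_nonneg _).trans hfs
  · linarith

theorem integrableOn_Ici_twistIntegrand (hφc : ContinuousOn φ (Ici a)) (hδ : 0 < δ)
    (hφ : ∀ u ∈ Ici a, δ ≤ (φ u).re) (hfc : ContinuousOn f (Ici a))
    (hf : ∀ s ∈ Ici a, ‖f s‖ ≤ C) : IntegrableOn (twistIntegrand a φ f) (Ici a) :=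
  Integrable.mono' ((integrableOn_Ici_iff_integrableOn_Ioi (by finiteness)).2
      ((exp_neg_integrableOn_Ioi a hδ).const_mul _))
    ((continuousOn_twistIntegrand hφc hfc).aestronglyMeasurable measurableSet_Ici)
    ((ae_restrict_iff' measurableSet_Ici).2 <| ae_of_all _ fun _ hs =>
      norm_twistIntegrand_le hφc hφ hf le_rfl hs)

theorem norm_integral_Ioi_twistIntegrand_le (hφc : ContinuousOn φ (Ici a)) (hδ : 0 < δ)
    (hφ : ∀ u ∈ Ici a, δ ≤ (φ u).re) (hf : ∀ s ∈ Ici a, ‖f s‖ ≤ C) {t : ℝ} (hat : a ≤ t) :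
    ‖∫ s in Ioi t, twistIntegrand a φ f s‖ ≤ C / δ * Real.exp (-(∫ u in a..t, φ u).re) :=
  calc ‖∫ s in Ioi t, twistIntegrand a φ f s‖
      ≤ ∫ s in Ioi t, C * Real.exp (δ * t - (∫ u in a..t, φ u).re) * Real.exp (-δ * s) :=
        norm_integral_le_of_norm_le ((exp_neg_integrableOn_Ioi t hδ).const_mul _)
          ((ae_restrict_iff' measurableSet_Ioi).2 <| ae_of_all _ fun _ hs =>
            norm_twistIntegrand_le hφc hφ hf hat (le_of_lt hs))
    _ = C / δ * Real.exp (-(∫ u in a..t, φ u).re) := by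
        rw [MeasureTheory.integral_const_mul, integral_exp_mul_Ioi (by linarith), Real.exp_sub,
          Real.exp_neg, neg_mul, Real.exp_neg]
        field_simp

theorem norm_twistIntR_le (hφc : ContinuousOn φ (Ici a)) (hδ : 0 < δ)
    (hφ : ∀ u ∈ Ici a, δ ≤ (φ u).re) (hf : ∀ s ∈ Ici a, ‖f s‖ ≤ C) {t : ℝ} (ht : t ∈ Ici a) :
    ‖twistIntR a φ f t‖ ≤ C / δ :=
  calc ‖twistIntR a φ f t‖
      = Real.exp (∫ u in a..t, φ u).re * ‖∫ s in Ioi t, twistIntegrand a φ f s‖ := by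
        rw [twistIntR, norm_mul, norm_neg, Complex.norm_exp]; rfl
    _ ≤ Real.exp (∫ u in a..t, φ u).re * (C / δ * Real.exp (-(∫ u in a..t, φ u).re)) := by
        gcongr
        exact norm_integral_Ioi_twistIntegrand_le hφc hδ hφ hf ht
    _ = C / δ := by
        rw [Real.exp_neg]
        field_simp

theorem twistIntR_eqOn (hint : IntegrableOn (twistIntegrand a φ f) (Ioi a)) :
    EqOn (twistIntR a φ f) (fun t => Complex.exp (∫ u in a..t, φ u) *
      ((∫ s in a..t, twistIntegrand a φ f s) - ∫ s in Ioi a, twistIntegrand a φ f s)) (Ici a) :=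
  fun t ht => by
    change _ * -(∫ s in Ioi t, twistIntegrand a φ f s) =
      _ * ((∫ s in a..t, twistIntegrand a φ f s) - _)
    rw [← integral_Ioi_sub_Ioi hint ht]
    ring

theorem hasDerivWithinAt_twistIntR (hφc : ContinuousOn φ (Ici a)) (hfc : ContinuousOn f (Ici a))
    (hint : IntegrableOn (twistIntegrand a φ f) (Ioi a)) {t : ℝ} (ht : t ∈ Ici a) :
    HasDerivWithinAt (twistIntR a φ f) (φ t * twistIntR a φ f t + f t) (Ici a) t := by
  have hΦ := hasDerivWithinAt_intervalIntegral_Ici hφc ht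
  have hG := hasDerivWithinAt_intervalIntegral_Ici (continuousOn_twistIntegrand hφc hfc) ht
  refine ((hΦ.cexp.mul (hG.sub_const _)).congr (twistIntR_eqOn hint)
    (twistIntR_eqOn hint ht)).congr_deriv ?_
  rw [twistIntR_eqOn hint ht, twistIntegrand, Complex.exp_neg]
  field_simp

end

/-- Repulsive twisted integration: if `Re φ ≥ ε > 0` on `[a,∞)` and `f` is bounded and
continuous on `[a,∞)`, then `e^{−Φ} f` is integrable at `∞`, and `B f` is `C¹` with
`(Bf)' − φ·(Bf) = f` and `sup_{t≥a}|Bf(t)| ≤ sup_{t≥a}|f(t)| · sup_{t≥a}|1/Re φ(t)|`. -/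
theorem stmt14 (a ε : ℝ) (hε : 0 < ε) (φ f : ℝ → ℂ)
    (hφc : ContinuousOn φ (Set.Ici a))
    (hφ : ∀ t ∈ Set.Ici a, ε ≤ (φ t).re)
    (hfc : ContinuousOn f (Set.Ici a))
    (Cf : ℝ) (hf : ∀ t ∈ Set.Ici a, ‖f t‖ ≤ Cf) :
    MeasureTheory.IntegrableOn
      (fun s => Complex.exp (-(∫ u in a..s, φ u)) * f s) (Set.Ici a) ∧
    (∀ t ∈ Set.Ici a,
      HasDerivWithinAt (twistIntR a φ f) (φ t * twistIntR a φ f t + f t) (Set.Ici a) t) ∧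
    (∀ Cr : ℝ, (∀ t ∈ Set.Ici a, |1 / (φ t).re| ≤ Cr) →
      ∀ t ∈ Set.Ici a, ‖twistIntR a φ f t‖ ≤ Cf * Cr) := by
  have hint : IntegrableOn (twistIntegrand a φ f) (Ici a) :=
    integrableOn_Ici_twistIntegrand hφc hε hφ hfc hf
  refine ⟨hint, fun t => hasDerivWithinAt_twistIntR hφc hfc (hint.mono_set Ioi_subset_Ici_self),
    fun Cr hCr t ht => ?_⟩
  have hre_pos : ∀ u ∈ Ici a, 0 < (φ u).re := fun u hu => hε.trans_le (hφ u hu)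
  have hinv_le : ∀ u ∈ Ici a, Cr⁻¹ ≤ (φ u).re := fun u hu =>
    inv_le_of_inv_le₀ (hre_pos u hu) <| by simpa [abs_of_pos (hre_pos u hu)] using hCr u hu
  have hCr_pos : 0 < Cr :=
    (abs_pos.2 (one_div_pos.2 (hre_pos a self_mem_Ici)).ne').trans_le (hCr a self_mem_Ici)
  simpa using norm_twistIntR_le hφc (inv_pos.2 hCr_pos) hinv_le hf ht
end

section
/- Let K be a differential field (of characteristic 0), P ∈ K{Y} an irreducible differential polynomial of order r ≥ 1 (viewing P as a polynomial in Y, Y', ..., Y^{(r)}), and E a differential ring extension of K containing an element y with P(y) = 0 and Q(y) a unit of E for every nonzero differential polynomial Q over K of order < r. Then y generates a differential subfield K⟨y⟩ of E containing K, P is a minimal annihilator of y over K, and K⟨y⟩ = { A(y)/B(y) : A, B ∈ K{Y}, order A ≤ r, deg_{Y^{(r)}} A < deg_{Y^{(r)}} P, B ≠ 0, order B < r }. -/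
/-!
Put `R = K[Y₀, …, Y_{r-1}]` and regard `P` as a polynomial in `Y_r` over `R`. Evaluation at
`y, y', …, y^{(r-1)}` sends every nonzero element of `R` to a unit of `E`, so it extends to
`Frac R`; by Gauss's lemma `P` stays irreducible over `Frac R`, hence `Frac(R)[Y_r] / (P)` is a
field and `Y_r ↦ y^{(r)}` embeds it into `E`. Its image is `K⟨y⟩`: division with remainder by
`P` and clearing denominators give the description by quotients, and injectivity gives
minimality. For closure under the derivation, differentiating `P(y) = 0` shows that
`∂P/∂Y_r (y) · y^{(r+1)}` lies in the image, and `∂P/∂Y_r (y)` is invertible there because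
`∂P/∂Y_r` is nonzero (characteristic 0) of lower degree in `Y_r` than `P`.
-/

open MvPolynomial
open scoped Polynomial

namespace MvPolynomial

variable {R : Type*} [CommRing R] {n : ℕ}

theorem finSuccEquiv_pderiv_zero (Q : MvPolynomial (Fin (n + 1)) R) :
    finSuccEquiv R n (pderiv 0 Q) = Polynomial.derivative (finSuccEquiv R n Q) := by
  induction Q using MvPolynomial.induction_on with
  | C a => simp [finSuccEquiv_apply]
  | add p q hp hq => simp [hp, hq]
  | mul_X p i hp =>
    induction i using Fin.cases with
    | zero =>
      simp only [pderiv_mul, pderiv_X_self, mul_one, map_add, map_mul, finSuccEquiv_X_zero, hp,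
        Polynomial.derivative_mul, Polynomial.derivative_X]
    | succ j =>
      simp only [pderiv_mul, pderiv_X_of_ne (Fin.succ_ne_zero j), mul_zero, add_zero, map_mul, hp,
        finSuccEquiv_X_succ, Polynomial.derivative_mul, Polynomial.derivative_C]

variable (R n) in
noncomputable def finSuccEquivLast :
    MvPolynomial (Fin (n + 1)) R ≃ₐ[R] (MvPolynomial (Fin n) R)[X] :=
  (renameEquiv R (finRotate (n + 1))).trans (finSuccEquiv R n)

theorem finSuccEquivLast_apply (Q : MvPolynomial (Fin (n + 1)) R) :
    finSuccEquivLast R n Q = finSuccEquiv R n (rename (finRotate (n + 1)) Q) := rfl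

theorem natDegree_finSuccEquivLast (Q : MvPolynomial (Fin (n + 1)) R) :
    (finSuccEquivLast R n Q).natDegree = Q.degreeOf (Fin.last n) := by
  rw [finSuccEquivLast_apply, natDegree_finSuccEquiv, ← finRotate_last,
    degreeOf_rename_of_injective (finRotate (n + 1)).injective]

theorem finSuccEquivLast_X_last : finSuccEquivLast R n (X (Fin.last n)) = Polynomial.X := by
  rw [finSuccEquivLast_apply, rename_X, finRotate_last, finSuccEquiv_X_zero]

theorem finSuccEquivLast_X_castSucc (j : Fin n) :
    finSuccEquivLast R n (X j.castSucc) = Polynomial.C (X j) := by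
  rw [finSuccEquivLast_apply, rename_X, finRotate_apply, Fin.coeSucc_eq_succ,
    finSuccEquiv_X_succ]

theorem finSuccEquivLast_pderiv_last (Q : MvPolynomial (Fin (n + 1)) R) :
    finSuccEquivLast R n (pderiv (Fin.last n) Q) =
      Polynomial.derivative (finSuccEquivLast R n Q) := by
  rw [finSuccEquivLast_apply, finSuccEquivLast_apply, ← finSuccEquiv_pderiv_zero,
    ← finRotate_last, pderiv_rename (finRotate (n + 1)).injective]

theorem eval₂_finSuccEquivLast {A : Type*} [CommRing A] [Algebra R A] (v : Fin (n + 1) → A)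
    (Q : MvPolynomial (Fin (n + 1)) R) :
    (finSuccEquivLast R n Q).eval₂ (aeval (Fin.init v)).toRingHom (v (Fin.last n)) =
      aeval v Q := by
  induction Q using MvPolynomial.induction_on with
  | C a => simp [finSuccEquivLast_apply, finSuccEquiv_apply]
  | add p q hp hq => simp only [map_add, Polynomial.eval₂_add, hp, hq]
  | mul_X p i hp =>
    rw [map_mul, Polynomial.eval₂_mul, hp, map_mul, aeval_X]
    induction i using Fin.lastCases with
    | last => rw [finSuccEquivLast_X_last, Polynomial.eval₂_X]
    | cast j => simp [finSuccEquivLast_X_castSucc, Fin.init]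

end MvPolynomial

section Derivation

variable {σ K E : Type*} [DecidableEq σ] [CommRing K] [CommRing E] [Algebra K E]
  (d : Derivation ℤ E E) {S : Subring E} {v : σ → E}

theorem exists_mem_derivation_aeval_eq_add (hS : ∀ Q : MvPolynomial σ K, aeval v Q ∈ S)
    (hdK : ∀ c : K, d (algebraMap K E c) ∈ S) {i₀ : σ} (hdv : ∀ i ≠ i₀, d (v i) ∈ S)
    (Q : MvPolynomial σ K) :
    ∃ a ∈ S, d (aeval v Q) = a + aeval v (pderiv i₀ Q) * d (v i₀) := by
  induction Q using MvPolynomial.induction_on with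
  | C c => exact ⟨_, hdK c, by simp⟩
  | add p q hp hq =>
    obtain ⟨a, ha, hpa⟩ := hp
    obtain ⟨b, hb, hqb⟩ := hq
    exact ⟨a + b, S.add_mem ha hb, by simp only [map_add, hpa, hqb]; ring⟩
  | mul_X p i hp =>
    obtain ⟨a, ha, hpa⟩ := hp
    have hvi : v i ∈ S := by simpa using hS (X i)
    by_cases hi : i = i₀
    · subst hi
      refine ⟨v i * a, S.mul_mem hvi ha, ?_⟩
      simp only [map_mul, aeval_X, Derivation.leibniz, smul_eq_mul, hpa, pderiv_X_self, map_add,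
        mul_one]
      ring
    · refine ⟨aeval v p * d (v i) + v i * a,
        S.add_mem (S.mul_mem (hS p) (hdv i hi)) (S.mul_mem hvi ha), ?_⟩
      simp only [map_mul, aeval_X, Derivation.leibniz, smul_eq_mul, hpa, pderiv_X_of_ne hi,
        map_add, map_zero]
      ring

theorem derivation_aeval_mem_of_aeval_eq_zero (hS : ∀ Q : MvPolynomial σ K, aeval v Q ∈ S)
    (hdK : ∀ c : K, d (algebraMap K E c) ∈ S) {i₀ : σ} (hdv : ∀ i ≠ i₀, d (v i) ∈ S)
    {P : MvPolynomial σ K} (hP : aeval v P = 0) {u : E} (hu : u ∈ S)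
    (hPu : aeval v (pderiv i₀ P) * u = 1) (Q : MvPolynomial σ K) : d (aeval v Q) ∈ S := by
  have hdv₀ : d (v i₀) ∈ S := by
    obtain ⟨a, ha, hPa⟩ := exists_mem_derivation_aeval_eq_add d hS hdK hdv P
    rw [hP, map_zero] at hPa
    have : d (v i₀) = -(u * a) := by linear_combination (-u) * hPa - d (v i₀) * hPu
    exact this ▸ S.neg_mem (S.mul_mem hu ha)
  obtain ⟨a, ha, hQa⟩ := exists_mem_derivation_aeval_eq_add d hS hdK hdv Q
  exact hQa ▸ S.add_mem ha (S.mul_mem (hS _) hdv₀)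

theorem derivation_mul_mem_of_mul_eq_one {a b u : E} (ha : a ∈ S) (hu : u ∈ S) (hda : d a ∈ S)
    (hdb : d b ∈ S) (hbu : b * u = 1) : d (a * u) ∈ S := by
  rw [Derivation.leibniz, d.leibniz_of_mul_eq_one ((mul_comm u b).trans hbu), smul_eq_mul,
    smul_eq_mul, smul_eq_mul]
  exact S.add_mem (S.mul_mem ha (S.mul_mem (S.neg_mem (S.pow_mem hu 2)) hdb)) (S.mul_mem hu hda)

end Derivation

theorem RingHom.exists_mul_eq_one_of_mem_range {k E : Type*} [DivisionRing k] [Ring E]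
    (φ : k →+* E) {e : E} (he : e ∈ φ.range) (he0 : e ≠ 0) :
    ∃ e' ∈ φ.range, e * e' = 1 := by
  obtain ⟨x, rfl⟩ := he
  refine ⟨φ x⁻¹, mem_range_self φ _, ?_⟩
  rw [← map_mul, mul_inv_cancel₀ (by rintro rfl; exact he0 (map_zero φ)), map_one]

section AdjoinRootLift

variable {R L E : Type*} [CommRing R] [IsDomain R] [Field L] [Algebra R L] [IsFractionRing R L]
  [CommRing E] {f : R →+* E} (hf : ∀ s : R, s ≠ 0 → IsUnit (f s)) {t : E} {p : R[X]}
  (hp : p.eval₂ f t = 0)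

variable (L) in
noncomputable def adjoinRootLiftOfIsUnit : AdjoinRoot (p.map (algebraMap R L)) →+* E :=
  AdjoinRoot.lift (IsLocalization.lift (M := nonZeroDivisors R)
      fun s => hf s (nonZeroDivisors.ne_zero s.2)) t
    (by rwa [Polynomial.eval₂_map, IsLocalization.lift_comp])

theorem adjoinRootLiftOfIsUnit_mk_map (g : R[X]) :
    adjoinRootLiftOfIsUnit L hf hp (AdjoinRoot.mk _ (g.map (algebraMap R L))) = g.eval₂ f t := by
  rw [adjoinRootLiftOfIsUnit, AdjoinRoot.lift_mk, Polynomial.eval₂_map, IsLocalization.lift_comp]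

theorem adjoinRootLiftOfIsUnit_of_algebraMap (s : R) :
    adjoinRootLiftOfIsUnit L hf hp (AdjoinRoot.of _ (algebraMap R L s)) = f s := by
  rw [← Polynomial.eval₂_C f t, ← adjoinRootLiftOfIsUnit_mk_map (L := L) hf hp,
    Polynomial.map_C]
  rfl

theorem eval₂_mem_range_adjoinRootLiftOfIsUnit (g : R[X]) :
    g.eval₂ f t ∈ (adjoinRootLiftOfIsUnit L hf hp).range :=
  ⟨_, adjoinRootLiftOfIsUnit_mk_map hf hp g⟩

theorem exists_mem_range_adjoinRootLiftOfIsUnit_mul_eq_one {s : R} (hs : s ≠ 0) :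
    ∃ u ∈ (adjoinRootLiftOfIsUnit L hf hp).range, f s * u = 1 := by
  have hsL : algebraMap R L s ≠ 0 := IsFractionRing.to_map_ne_zero_of_mem_nonZeroDivisors
    (mem_nonZeroDivisors_of_ne_zero hs)
  refine ⟨_, RingHom.mem_range_self _ (AdjoinRoot.of _ (algebraMap R L s)⁻¹), ?_⟩
  rw [← adjoinRootLiftOfIsUnit_of_algebraMap (L := L) hf hp, ← map_mul, ← map_mul,
    mul_inv_cancel₀ hsL, map_one, map_one]

variable (L) in
theorem natDegree_le_of_eval₂_eq_zero [Nontrivial E] [Fact (Irreducible (p.map (algebraMap R L)))]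
    (hf : ∀ s : R, s ≠ 0 → IsUnit (f s)) (hp : p.eval₂ f t = 0) {q : R[X]} (hq : q ≠ 0)
    (hqt : q.eval₂ f t = 0) : p.natDegree ≤ q.natDegree := by
  have hmk : AdjoinRoot.mk _ (q.map (algebraMap R L)) = 0 :=
    (adjoinRootLiftOfIsUnit L hf hp).injective <| by
      rw [adjoinRootLiftOfIsUnit_mk_map, hqt, map_zero]
  have hdvd := Polynomial.natDegree_le_of_dvd (AdjoinRoot.mk_eq_zero.mp hmk)
    ((Polynomial.map_ne_zero_iff (IsFractionRing.injective R L)).mpr hq)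
  rwa [Polynomial.natDegree_map_eq_of_injective (IsFractionRing.injective R L),
    Polynomial.natDegree_map_eq_of_injective (IsFractionRing.injective R L)] at hdvd

theorem mem_range_adjoinRootLiftOfIsUnit_iff [Fact (Irreducible (p.map (algebraMap R L)))]
    {e : E} : e ∈ (adjoinRootLiftOfIsUnit L hf hp).range ↔
      ∃ a g : R[X], a.natDegree < p.natDegree ∧ g ≠ 0 ∧ g.natDegree = 0 ∧
        e * g.eval₂ f t = a.eval₂ f t := by
  constructor
  · rintro ⟨m, rfl⟩
    obtain ⟨g, rfl⟩ := AdjoinRoot.mk_surjective m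
    set q := p.map (algebraMap R L)
    have hq : q.natDegree ≠ 0 := (Irreducible.natDegree_pos Fact.out).ne'
    have hmod : AdjoinRoot.mk q (g % q) = AdjoinRoot.mk q g := by
      rw [EuclideanDomain.mod_eq_sub_mul_div, map_sub, map_mul, AdjoinRoot.mk_self, zero_mul,
        sub_zero]
    obtain ⟨b, hb, hbg⟩ := IsLocalization.integerNormalization_spec (nonZeroDivisors R) (g % q)
    set a := IsLocalization.integerNormalization (nonZeroDivisors R) (g % q)
    refine ⟨a, Polynomial.C b, ?_, Polynomial.C_ne_zero.mpr (nonZeroDivisors.ne_zero hb),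
      Polynomial.natDegree_C b, ?_⟩
    · calc a.natDegree = (b • (g % q)).natDegree := by
            rw [← hbg, Polynomial.natDegree_map_eq_of_injective (IsFractionRing.injective R L)]
        _ ≤ (g % q).natDegree := Polynomial.natDegree_smul_le _ _
        _ < q.natDegree := Polynomial.natDegree_mod_lt g hq
        _ = p.natDegree := Polynomial.natDegree_map_eq_of_injective (IsFractionRing.injective R L) p
    · rw [Polynomial.eval₂_C, ← adjoinRootLiftOfIsUnit_of_algebraMap (L := L) hf hp,
        ← adjoinRootLiftOfIsUnit_mk_map (L := L) hf hp a, hbg, Algebra.smul_def,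
        Polynomial.algebraMap_apply, map_mul, hmod, ← map_mul, mul_comm]
      rfl
  · rintro ⟨a, g, -, hg0, hg, he⟩
    obtain ⟨s, rfl⟩ := Polynomial.natDegree_eq_zero.mp hg
    obtain ⟨u, hu, hsu⟩ := exists_mem_range_adjoinRootLiftOfIsUnit_mul_eq_one (L := L) hf hp
      (Polynomial.C_ne_zero.mp hg0)
    rw [Polynomial.eval₂_C] at he
    have he' : e = a.eval₂ f t * u := by rw [← he, mul_assoc, hsu, mul_one]
    exact he' ▸ Subring.mul_mem _ (eval₂_mem_range_adjoinRootLiftOfIsUnit hf hp a) hu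

theorem derivation_mem_range_adjoinRootLiftOfIsUnit
    [Fact (Irreducible (p.map (algebraMap R L)))] (d : Derivation ℤ E E)
    (hd : ∀ g : R[X], d (g.eval₂ f t) ∈ (adjoinRootLiftOfIsUnit L hf hp).range)
    {e : E} (he : e ∈ (adjoinRootLiftOfIsUnit L hf hp).range) :
    d e ∈ (adjoinRootLiftOfIsUnit L hf hp).range := by
  obtain ⟨a, g, -, hg0, hg, he⟩ := (mem_range_adjoinRootLiftOfIsUnit_iff hf hp).mp he
  obtain ⟨s, rfl⟩ := Polynomial.natDegree_eq_zero.mp hg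
  obtain ⟨u, hu, hsu⟩ := exists_mem_range_adjoinRootLiftOfIsUnit_mul_eq_one (L := L) hf hp
    (Polynomial.C_ne_zero.mp hg0)
  rw [Polynomial.eval₂_C] at he
  have he' : e = a.eval₂ f t * u := by rw [← he, mul_assoc, hsu, mul_one]
  refine he' ▸ derivation_mul_mem_of_mul_eq_one d
    (eval₂_mem_range_adjoinRootLiftOfIsUnit hf hp a) hu (hd a) ?_ hsu
  simpa using hd (Polynomial.C s)

variable (L) in
theorem exists_mul_eval₂_derivative_eq_one [CharZero R] [Nontrivial E]
    [Fact (Irreducible (p.map (algebraMap R L)))] :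
    ∃ u ∈ (adjoinRootLiftOfIsUnit L hf hp).range,
      (Polynomial.derivative p).eval₂ f t * u = 1 := by
  have hp0 : p.natDegree ≠ 0 := by
    rw [← Polynomial.natDegree_map_eq_of_injective (IsFractionRing.injective R L)]
    exact (Irreducible.natDegree_pos Fact.out).ne'
  refine RingHom.exists_mul_eq_one_of_mem_range _
    (eval₂_mem_range_adjoinRootLiftOfIsUnit hf hp _) fun h => ?_
  exact (Polynomial.natDegree_derivative_lt hp0).not_ge
    (natDegree_le_of_eval₂_eq_zero L hf hp (Polynomial.derivative_ne_zero.mpr hp0) h)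

end AdjoinRootLift

theorem irreducible_map_finSuccEquivLast {K : Type*} [Field K] {r : ℕ}
    {P : MvPolynomial (Fin (r + 1)) K} (hP : Irreducible P) (hPr : 0 < P.degreeOf (Fin.last r)) :
    Irreducible ((finSuccEquivLast K r P).map
      (algebraMap (MvPolynomial (Fin r) K) (FractionRing (MvPolynomial (Fin r) K)))) := by
  have hp : Irreducible (finSuccEquivLast K r P) := (MulEquiv.irreducible_iff _).mpr hP
  refine ((hp.isPrimitive ?_).irreducible_iff_irreducible_map_fraction_map).mp hp
  rw [natDegree_finSuccEquivLast]
  exact hPr.ne'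

section RatEvalSubring

variable {K E : Type*} [Field K] [CommRing E] [Algebra K E] {r : ℕ} {v : Fin (r + 1) → E}
  (hf : ∀ s : MvPolynomial (Fin r) K, s ≠ 0 → IsUnit (aeval (Fin.init v) s))
  {P : MvPolynomial (Fin (r + 1)) K} (hP : aeval v P = 0)

/-- `K⟨v⟩`, as the image of `K(Y₀, …, Y_{r-1})[Y_r] / (P)` under `Yᵢ ↦ v i`. -/
noncomputable def ratEvalSubring : Subring E :=
  (adjoinRootLiftOfIsUnit (FractionRing (MvPolynomial (Fin r) K)) hf
    ((eval₂_finSuccEquivLast v P).trans hP)).range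

theorem aeval_mem_ratEvalSubring (Q : MvPolynomial (Fin (r + 1)) K) :
    aeval v Q ∈ ratEvalSubring hf hP := by
  rw [← eval₂_finSuccEquivLast]
  exact eval₂_mem_range_adjoinRootLiftOfIsUnit hf _ _

theorem exists_mul_eq_one_of_mem_ratEvalSubring (hPirr : Irreducible P)
    (hPr : 0 < P.degreeOf (Fin.last r)) {e : E} (he : e ∈ ratEvalSubring hf hP)
    (he0 : e ≠ 0) : ∃ e' ∈ ratEvalSubring hf hP, e * e' = 1 :=
  have := Fact.mk (irreducible_map_finSuccEquivLast hPirr hPr)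
  RingHom.exists_mul_eq_one_of_mem_range _ he he0

theorem mem_ratEvalSubring_iff (hPirr : Irreducible P) (hPr : 0 < P.degreeOf (Fin.last r))
    {e : E} : e ∈ ratEvalSubring hf hP ↔
      ∃ A B : MvPolynomial (Fin (r + 1)) K, A.degreeOf (Fin.last r) < P.degreeOf (Fin.last r) ∧
        B ≠ 0 ∧ B.degreeOf (Fin.last r) = 0 ∧ e * aeval v B = aeval v A := by
  have := Fact.mk (irreducible_map_finSuccEquivLast hPirr hPr)
  rw [ratEvalSubring, mem_range_adjoinRootLiftOfIsUnit_iff]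
  simp only [← natDegree_finSuccEquivLast, ← eval₂_finSuccEquivLast]
  constructor
  · rintro ⟨a, g, h⟩
    refine ⟨(finSuccEquivLast K r).symm a, (finSuccEquivLast K r).symm g, ?_⟩
    simpa only [AlgEquiv.apply_symm_apply, ne_eq, map_eq_zero_iff _ (AlgEquiv.injective _)]
  · rintro ⟨A, B, hA, hB, h⟩
    exact ⟨_, _, hA, (map_ne_zero_iff _ (finSuccEquivLast K r).injective).mpr hB, h⟩

theorem degreeOf_le_of_aeval_eq_zero [Nontrivial E]
    (hf : ∀ s : MvPolynomial (Fin r) K, s ≠ 0 → IsUnit (aeval (Fin.init v) s))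
    (hP : aeval v P = 0) (hPirr : Irreducible P) (hPr : 0 < P.degreeOf (Fin.last r))
    {Q : MvPolynomial (Fin (r + 1)) K} (hQ : Q ≠ 0) (hQv : aeval v Q = 0) :
    P.degreeOf (Fin.last r) ≤ Q.degreeOf (Fin.last r) := by
  have := Fact.mk (irreducible_map_finSuccEquivLast hPirr hPr)
  have := natDegree_le_of_eval₂_eq_zero (FractionRing (MvPolynomial (Fin r) K)) hf
    ((eval₂_finSuccEquivLast v P).trans hP)
    ((map_ne_zero_iff _ (finSuccEquivLast K r).injective).mpr hQ)
    ((eval₂_finSuccEquivLast v Q).trans hQv)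
  rwa [natDegree_finSuccEquivLast, natDegree_finSuccEquivLast] at this

theorem derivation_mem_ratEvalSubring [CharZero K] [Nontrivial E] (hPirr : Irreducible P)
    (hPr : 0 < P.degreeOf (Fin.last r)) (d : Derivation ℤ E E)
    (hdK : ∀ c : K, d (algebraMap K E c) ∈ ratEvalSubring hf hP)
    (hdv : ∀ i ≠ Fin.last r, d (v i) ∈ ratEvalSubring hf hP) {e : E}
    (he : e ∈ ratEvalSubring hf hP) : d e ∈ ratEvalSubring hf hP := by
  have := Fact.mk (irreducible_map_finSuccEquivLast hPirr hPr)
  obtain ⟨u, hu, hPu⟩ := exists_mul_eval₂_derivative_eq_one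
    (FractionRing (MvPolynomial (Fin r) K)) hf ((eval₂_finSuccEquivLast v P).trans hP)
  rw [← finSuccEquivLast_pderiv_last, eval₂_finSuccEquivLast] at hPu
  have hdF := derivation_aeval_mem_of_aeval_eq_zero d (aeval_mem_ratEvalSubring hf hP) hdK hdv
    hP hu hPu
  refine derivation_mem_range_adjoinRootLiftOfIsUnit hf _ d (fun g => ?_) he
  rw [← (finSuccEquivLast K r).apply_symm_apply g, eval₂_finSuccEquivLast]
  exact hdF _

end RatEvalSubring

theorem stmt15_general {K E : Type*} [Field K] [CharZero K] [CommRing E] [Nontrivial E]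
    [Algebra K E]
    (dK : Derivation ℤ K K) (dE : Derivation ℤ E E)
    (hcompat : ∀ x : K, dE (algebraMap K E x) = algebraMap K E (dK x))
    (r : ℕ)
    (P : MvPolynomial (Fin (r + 1)) K) (hPirr : Irreducible P)
    (hPord : 0 < P.degreeOf (Fin.last r))
    (y : E)
    (hPy : (MvPolynomial.aeval (fun i : Fin (r + 1) => (⇑dE)^[(i : ℕ)] y)) P = 0)
    (hunits : ∀ Q : MvPolynomial (Fin r) K, Q ≠ 0 →
      IsUnit ((MvPolynomial.aeval (fun i : Fin r => (⇑dE)^[(i : ℕ)] y)) Q)) :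
    ∃ F : Subring E,
      -- K⟨y⟩ contains K and y, and is closed under the derivation
      (∀ c : K, algebraMap K E c ∈ F) ∧ y ∈ F ∧ (∀ e ∈ F, dE e ∈ F) ∧
      -- K⟨y⟩ is a field
      (∀ e ∈ F, e ≠ 0 → ∃ e' ∈ F, e * e' = 1) ∧
      -- description of K⟨y⟩ as the set of quotients A(y)/B(y)
      (∀ e : E, e ∈ F ↔ ∃ A B : MvPolynomial (Fin (r + 1)) K,
        A.degreeOf (Fin.last r) < P.degreeOf (Fin.last r) ∧
        B ≠ 0 ∧ B.degreeOf (Fin.last r) = 0 ∧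
        e * (MvPolynomial.aeval (fun i : Fin (r + 1) => (⇑dE)^[(i : ℕ)] y)) B =
          (MvPolynomial.aeval (fun i : Fin (r + 1) => (⇑dE)^[(i : ℕ)] y)) A) ∧
      -- P is a minimal annihilator of y over K
      (∀ Q : MvPolynomial (Fin (r + 1)) K, Q ≠ 0 →
        (MvPolynomial.aeval (fun i : Fin (r + 1) => (⇑dE)^[(i : ℕ)] y)) Q = 0 →
        P.degreeOf (Fin.last r) ≤ Q.degreeOf (Fin.last r)) := by
  set v : Fin (r + 1) → E := fun i => (⇑dE)^[(i : ℕ)] y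
  have hf : ∀ s, s ≠ 0 → IsUnit (aeval (Fin.init v) s) := hunits
  have hdv : ∀ i ≠ Fin.last r, dE (v i) ∈ ratEvalSubring hf hPy := fun i hi => by
    obtain ⟨j, rfl⟩ := Fin.exists_castSucc_eq.mpr hi
    simpa [v, ← Function.iterate_succ_apply' dE] using aeval_mem_ratEvalSubring hf hPy (X j.succ)
  have hdK (c : K) : dE (algebraMap K E c) ∈ ratEvalSubring hf hPy := by
    simpa [hcompat] using aeval_mem_ratEvalSubring hf hPy (C (dK c))
  exact ⟨ratEvalSubring hf hPy, fun c => by simpa using aeval_mem_ratEvalSubring hf hPy (C c),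
    by simpa [v] using aeval_mem_ratEvalSubring hf hPy (X 0),
    fun _ => derivation_mem_ratEvalSubring hf hPy hPirr hPord dE hdK hdv,
    fun _ => exists_mul_eq_one_of_mem_ratEvalSubring hf hPy hPirr hPord,
    fun _ => mem_ratEvalSubring_iff hf hPy hPirr hPord,
    fun _ => degreeOf_le_of_aeval_eq_zero hf hPy hPirr hPord⟩

/-- Differential polynomials of order `≤ r` over `K` are modeled as multivariate
polynomials in the variables `Y, Y', …, Y^{(r)}` (indexed by `Fin (r+1)`), evaluated at
the iterated derivatives of an element `y` of a differential ring extension `E` of `K`.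

If `P` is irreducible of order `r ≥ 1` with `P(y) = 0`, and `Q(y)` is a unit of `E` for
every nonzero differential polynomial `Q` over `K` of order `< r`, then `y` generates a
differential subfield `K⟨y⟩` of `E` containing `K`, `P` is a minimal annihilator of `y`
over `K`, and `K⟨y⟩` consists of the quotients `A(y)/B(y)` with `order A ≤ r`,
`deg_{Y^{(r)}} A < deg_{Y^{(r)}} P`, `B ≠ 0`, `order B < r`. -/
theorem stmt15 {K E : Type*} [Field K] [CharZero K] [CommRing E] [Nontrivial E]
    [Algebra K E] (hinj : Function.Injective (algebraMap K E))
    (dK : Derivation ℤ K K) (dE : Derivation ℤ E E)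
    (hcompat : ∀ x : K, dE (algebraMap K E x) = algebraMap K E (dK x))
    (r : ℕ) (hr : 1 ≤ r)
    (P : MvPolynomial (Fin (r + 1)) K) (hPirr : Irreducible P)
    (hPord : 0 < P.degreeOf (Fin.last r))
    (y : E)
    (hPy : (MvPolynomial.aeval (fun i : Fin (r + 1) => (⇑dE)^[(i : ℕ)] y)) P = 0)
    (hunits : ∀ Q : MvPolynomial (Fin r) K, Q ≠ 0 →
      IsUnit ((MvPolynomial.aeval (fun i : Fin r => (⇑dE)^[(i : ℕ)] y)) Q)) :
    ∃ F : Subring E,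
      -- K⟨y⟩ contains K and y, and is closed under the derivation
      (∀ c : K, algebraMap K E c ∈ F) ∧ y ∈ F ∧ (∀ e ∈ F, dE e ∈ F) ∧
      -- K⟨y⟩ is a field
      (∀ e ∈ F, e ≠ 0 → ∃ e' ∈ F, e * e' = 1) ∧
      -- description of K⟨y⟩ as the set of quotients A(y)/B(y)
      (∀ e : E, e ∈ F ↔ ∃ A B : MvPolynomial (Fin (r + 1)) K,
        A.degreeOf (Fin.last r) < P.degreeOf (Fin.last r) ∧
        B ≠ 0 ∧ B.degreeOf (Fin.last r) = 0 ∧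
        e * (MvPolynomial.aeval (fun i : Fin (r + 1) => (⇑dE)^[(i : ℕ)] y)) B =
          (MvPolynomial.aeval (fun i : Fin (r + 1) => (⇑dE)^[(i : ℕ)] y)) A) ∧
      -- P is a minimal annihilator of y over K
      (∀ Q : MvPolynomial (Fin (r + 1)) K, Q ≠ 0 →
        (MvPolynomial.aeval (fun i : Fin (r + 1) => (⇑dE)^[(i : ℕ)] y)) Q = 0 →
        P.degreeOf (Fin.last r) ≤ Q.degreeOf (Fin.last r)) :=
  stmt15_general dK dE hcompat r P hPirr hPord y hPy hunits
end

section
/- Let H be a Hausdorff field (a subfield of the ring C of germs at +∞ of continuous real-valued functions), let Ĥ be an immediate valued field extension of H (ordered so that the valuation ring of Ĥ is convex), let f, g ∈ C and f̂, ĝ ∈ Ĥ with f ∼_H f̂ and g ∼_H ĝ. Then 1/f ∼_H 1/f̂ and f·g ∼_H f̂·ĝ; moreover f ≼ g in C if and only if f̂ ≼ ĝ in Ĥ, and likewise with ≺, ≍, ∼ in place of ≼. -/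
open Filter

/-- The ring `𝒞` of germs at `+∞` of real-valued functions on `ℝ`. -/
abbrev GermR : Type := Filter.Germ (Filter.atTop : Filter ℝ) ℝ

/-- `f ≼ g` in `𝒞`: `|f| ≤ c·|g|` eventually, for some real `c > 0`. -/
def Dominates (f g : GermR) : Prop :=
  ∃ F G : ℝ → ℝ, f = (↑F : GermR) ∧ g = (↑G : GermR) ∧
    ∃ c : ℝ, 0 < c ∧ ∀ᶠ t in atTop, |F t| ≤ c * |G t|

/-- `f ≺ g` in `𝒞`: `g` is eventually nonzero (a unit of `𝒞`) and `f/g → 0`. -/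
def StrictDominates (f g : GermR) : Prop :=
  ∃ F G : ℝ → ℝ, f = (↑F : GermR) ∧ g = (↑G : GermR) ∧
    (∀ᶠ t in atTop, G t ≠ 0) ∧ Tendsto (fun t => F t / G t) atTop (nhds 0)

/-- `f ∼ g` in `𝒞`: `f − g ≺ g`. -/
def GermSim (f g : GermR) : Prop := StrictDominates (f - g) g

/-- `H` is a Hausdorff field: a subring of `𝒞` consisting of germs of continuous
functions which is a field. -/
def IsHausdorffField (H : Subring GermR) : Prop :=
  (∀ f ∈ H, ∃ F : ℝ → ℝ, f = (↑F : GermR) ∧ ∀ᶠ t in atTop, ContinuousAt F t) ∧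
  (∀ f ∈ H, f ≠ 0 → ∃ g ∈ H, f * g = 1)

/-- Dominance `x ≼ y` in a valued field `L` with valuation ring `O`:
`x ∈ y·O`, i.e. `v(x) ≥ v(y)`. -/
def LPreceq {L : Type*} [Field L] (O : Subring L) (x y : L) : Prop :=
  ∃ c ∈ O, x = c * y

/-- Strict dominance `x ≺ y` in `(L, O)`. -/
def LPrec {L : Type*} [Field L] (O : Subring L) (x y : L) : Prop :=
  LPreceq O x y ∧ ¬ LPreceq O y x

/-- Asymptotic equivalence `x ∼ y` in `(L, O)`: `x − y ≺ y`. -/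
def LSim {L : Type*} [Field L] (O : Subring L) (x y : L) : Prop :=
  LPrec O (x - y) y

/-- `f ∈ 𝒞` is asymptotically similar over `H` to `x ∈ L = Ĥ`:
`f ∼ φ` in `𝒞` and `φ ∼ x` in `Ĥ` for some `φ ∈ H`. -/
def SimH (H : Subring GermR) {L : Type*} [Field L] (O : Subring L)
    (ι : H →+* L) (f : GermR) (x : L) : Prop :=
  ∃ h : H, GermSim f (↑h : GermR) ∧ LSim O x (ι h)

/-!
Everything is compared through `H`. If `f ∼ φ` in `𝒞` then `f` and `φ` stand in the same
relations `≼, ≺, ∼` to other germs, and if `f̂ ∼ φ` in `Ĥ` then `f̂` and `φ` have the same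
valuation. For `φ, ψ ∈ H` with `ψ ≠ 0`, `φ ≼ ψ` in `𝒞` means `φ/ψ ≼ 1`, which is exactly the
compatibility of the two valuations. The strict relation transfers because in a Hausdorff
field `¬ ψ ≼ φ` forces `φ ≺ ψ`: each `(nφ)² − ψ²` is zero or a unit with a continuous
representative, hence of eventually constant sign. Finally `φ ∼ ψ` is `φ − ψ ≺ ψ`, and
products and inverses are handled by multiplicativity on both sides.
-/

open Asymptotics

lemma dominates_coe {F G : ℝ → ℝ} : Dominates (F : GermR) G ↔ F =O[atTop] G := by
  simp only [Dominates, Germ.coe_eq, isBigO_iff', Real.norm_eq_abs]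
  constructor
  · rintro ⟨F', G', hF, hG, c, hc, h⟩
    exact ⟨c, hc, by filter_upwards [h, hF, hG] with t ht hFt hGt; rwa [hFt, hGt]⟩
  · rintro ⟨c, hc, h⟩
    exact ⟨F, G, .rfl, .rfl, c, hc, h⟩

lemma strictDominates_coe {F G : ℝ → ℝ} :
    StrictDominates (F : GermR) G ↔ (∀ᶠ t in atTop, G t ≠ 0) ∧ F =o[atTop] G := by
  have key : ∀ {F G : ℝ → ℝ}, (∀ᶠ t in atTop, G t ≠ 0) →
      (F =o[atTop] G ↔ Tendsto (fun t => F t / G t) atTop (nhds 0)) := fun hG =>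
    isLittleO_iff_tendsto' (hG.mono fun t ht h => absurd h ht)
  simp only [StrictDominates, Germ.coe_eq]
  constructor
  · rintro ⟨F', G', hF, hG, hG0, h⟩
    have hG0' : ∀ᶠ t in atTop, G t ≠ 0 := by
      filter_upwards [hG0, hG] with t ht hGt; rwa [hGt]
    exact ⟨hG0', ((key hG0).2 h).congr' hF.symm hG.symm⟩
  · rintro ⟨hG0, h⟩
    exact ⟨F, G, .rfl, .rfl, hG0, (key hG0).1 h⟩

lemma germSim_coe {F G : ℝ → ℝ} :
    GermSim (F : GermR) G ↔ (∀ᶠ t in atTop, G t ≠ 0) ∧ F ~[atTop] G := by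
  rw [GermSim, ← Germ.coe_sub, strictDominates_coe, IsEquivalent]

lemma dominates_zero_iff {f : GermR} : Dominates f 0 ↔ f = 0 := by
  induction f using Germ.inductionOn with | h F =>
  rw [← Germ.coe_zero, dominates_coe, Germ.coe_eq]
  exact isBigO_zero_right_iff

lemma Dominates.mul_right {f g : GermR} (h : Dominates f g) (k : GermR) :
    Dominates (f * k) (g * k) := by
  induction f using Germ.inductionOn with | h F =>
  induction g using Germ.inductionOn with | h G =>
  induction k using Germ.inductionOn with | h K =>
  rw [dominates_coe] at h
  rw [← Germ.coe_mul, ← Germ.coe_mul, dominates_coe]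
  exact h.mul (isBigO_refl K atTop)

lemma dominates_iff_dominates_one {f g g' : GermR} (hg : g * g' = 1) :
    Dominates f g ↔ Dominates (f * g') 1 := by
  refine ⟨fun h => hg ▸ h.mul_right g', fun h => ?_⟩
  simpa [mul_assoc, mul_comm g' g, hg] using h.mul_right g

lemma eventually_mul_eq_one {F G : ℝ → ℝ} (h : (F : GermR) * G = 1) :
    ∀ᶠ t in atTop, F t * G t = 1 :=
  Germ.coe_eq.1 h

lemma eventually_ne_zero_of_mul_eq_one {F G : ℝ → ℝ} (h : (F : GermR) * G = 1) :
    ∀ᶠ t in atTop, F t ≠ 0 :=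
  (eventually_mul_eq_one h).mono fun _ ht => left_ne_zero_of_mul_eq_one ht

lemma eventuallyEq_inv_of_mul_eq_one {F G : ℝ → ℝ} (h : (F : GermR) * G = 1) :
    G =ᶠ[atTop] F⁻¹ :=
  (eventually_mul_eq_one h).mono fun _ ht => eq_inv_of_mul_eq_one_right ht

lemma eventually_ne_zero_of_isEquivalent {F G : ℝ → ℝ} (h : F ~[atTop] G)
    (hG : ∀ᶠ t in atTop, G t ≠ 0) : ∀ᶠ t in atTop, F t ≠ 0 := by
  filter_upwards [hG, h.isBigO_symm.eq_zero_imp] with t ht h0 using mt h0 ht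

lemma dominates_congr {f g φ ψ : GermR} (hf : GermSim f φ) (hg : GermSim g ψ) :
    Dominates f g ↔ Dominates φ ψ := by
  induction f using Germ.inductionOn with | h F =>
  induction g using Germ.inductionOn with | h G =>
  induction φ using Germ.inductionOn with | h Φ =>
  induction ψ using Germ.inductionOn with | h Ψ =>
  rw [germSim_coe] at hf hg
  rw [dominates_coe, dominates_coe]
  exact ⟨fun h => hf.2.isBigO_symm.trans (h.trans hg.2.isBigO),
    fun h => hf.2.isBigO.trans (h.trans hg.2.isBigO_symm)⟩

lemma strictDominates_congr {f g φ ψ : GermR} (hf : GermSim f φ) (hg : GermSim g ψ) :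
    StrictDominates f g ↔ StrictDominates φ ψ := by
  induction f using Germ.inductionOn with | h F =>
  induction g using Germ.inductionOn with | h G =>
  induction φ using Germ.inductionOn with | h Φ =>
  induction ψ using Germ.inductionOn with | h Ψ =>
  rw [germSim_coe] at hf hg
  have hG := eventually_ne_zero_of_isEquivalent hg.2 hg.1
  rw [strictDominates_coe, strictDominates_coe, and_iff_right hG, and_iff_right hg.1]
  exact ⟨fun h => hf.2.symm.trans_isLittleO (h.trans_isEquivalent hg.2),
    fun h => hf.2.trans_isLittleO (h.trans_isEquivalent hg.2.symm)⟩

lemma germSim_congr {f g φ ψ : GermR} (hf : GermSim f φ) (hg : GermSim g ψ) :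
    GermSim f g ↔ GermSim φ ψ := by
  induction f using Germ.inductionOn with | h F =>
  induction g using Germ.inductionOn with | h G =>
  induction φ using Germ.inductionOn with | h Φ =>
  induction ψ using Germ.inductionOn with | h Ψ =>
  rw [germSim_coe] at hf hg
  have hG := eventually_ne_zero_of_isEquivalent hg.2 hg.1
  rw [germSim_coe, germSim_coe, and_iff_right hG, and_iff_right hg.1]
  exact ⟨fun h => hf.2.symm.trans (h.trans hg.2), fun h => hf.2.trans (h.trans hg.2.symm)⟩

lemma GermSim.isUnit {f φ : GermR} (h : GermSim f φ) : IsUnit f := by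
  induction f using Germ.inductionOn with | h F =>
  induction φ using Germ.inductionOn with | h Φ =>
  rw [germSim_coe] at h
  refine IsUnit.of_mul_eq_one ((F⁻¹ : ℝ → ℝ) : GermR) (Germ.coe_eq.2 ?_)
  filter_upwards [eventually_ne_zero_of_isEquivalent h.2 h.1] with t ht
  exact mul_inv_cancel₀ ht

lemma GermSim.mul {f g φ ψ : GermR} (hf : GermSim f φ) (hg : GermSim g ψ) :
    GermSim (f * g) (φ * ψ) := by
  induction f using Germ.inductionOn with | h F =>
  induction g using Germ.inductionOn with | h G =>
  induction φ using Germ.inductionOn with | h Φ =>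
  induction ψ using Germ.inductionOn with | h Ψ =>
  rw [germSim_coe] at hf hg
  rw [← Germ.coe_mul, ← Germ.coe_mul, germSim_coe]
  exact ⟨hf.1.and hg.1 |>.mono fun t ht => mul_ne_zero ht.1 ht.2, hf.2.mul hg.2⟩

lemma GermSim.inv {f f' φ φ' : GermR} (h : GermSim f φ) (hf : f * f' = 1) (hφ : φ * φ' = 1) :
    GermSim f' φ' := by
  induction f using Germ.inductionOn with | h F =>
  induction f' using Germ.inductionOn with | h F' =>
  induction φ using Germ.inductionOn with | h Φ =>
  induction φ' using Germ.inductionOn with | h Φ' =>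
  rw [germSim_coe] at h ⊢
  refine ⟨eventually_ne_zero_of_mul_eq_one (mul_comm (Φ : GermR) Φ' ▸ hφ), ?_⟩
  exact (eventuallyEq_inv_of_mul_eq_one hf).trans_isEquivalent
    (h.2.inv.trans_eventuallyEq (eventuallyEq_inv_of_mul_eq_one hφ).symm)

lemma eventually_pos_or_eventually_neg {W : ℝ → ℝ} (hc : ∀ᶠ t in atTop, ContinuousAt W t)
    (hW : ∀ᶠ t in atTop, W t ≠ 0) : (∀ᶠ t in atTop, 0 < W t) ∨ ∀ᶠ t in atTop, W t < 0 := by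
  obtain ⟨a, ha⟩ := eventually_atTop.1 (hc.and hW)
  have hcont : ContinuousOn W (Set.Ici a) := fun t ht => (ha t ht).1.continuousWithinAt
  by_contra! h
  obtain ⟨s, hWs, hs⟩ := (h.1.and_eventually (eventually_ge_atTop a)).exists
  obtain ⟨r, hWr, hr⟩ := (h.2.and_eventually (eventually_ge_atTop a)).exists
  obtain ⟨t, ht, hWt⟩ := isPreconnected_Ici.intermediate_value hs hr hcont ⟨hWs, hWr⟩
  exact (ha t ht).2 hWt

namespace IsHausdorffField

variable {H : Subring GermR}

lemma exists_mul_eq_one (hH : IsHausdorffField H) {φ : H} (hφ : φ ≠ 0) :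
    ∃ φ' : H, φ * φ' = 1 := by
  obtain ⟨φ', hφ'H, hφφ'⟩ := hH.2 φ φ.2 (by simpa using hφ)
  exact ⟨⟨φ', hφ'H⟩, Subtype.ext hφφ'⟩

lemma eventually_ne_zero (hH : IsHausdorffField H) {W : ℝ → ℝ} (hW : (W : GermR) ∈ H)
    (h0 : (W : GermR) ≠ 0) : ∀ᶠ t in atTop, W t ≠ 0 := by
  obtain ⟨w', -, hw'⟩ := hH.2 _ hW h0
  induction w' using Germ.inductionOn with | h W' =>
  exact eventually_ne_zero_of_mul_eq_one hw'

lemma eventually_nonneg_or_eventually_neg (hH : IsHausdorffField H) {W : ℝ → ℝ}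
    (hW : (W : GermR) ∈ H) :
    (∀ᶠ t in atTop, 0 ≤ W t) ∨ ∀ᶠ t in atTop, W t < 0 := by
  by_cases h0 : (W : GermR) = 0
  · exact .inl ((Germ.coe_eq.1 h0).mono fun _ ht => ht.ge)
  obtain ⟨Wc, hWc, hcont⟩ := hH.1 _ hW
  have hW' : ∀ᶠ t in atTop, Wc t = W t := (Germ.coe_eq.1 hWc).symm
  have hWc0 : ∀ᶠ t in atTop, Wc t ≠ 0 := by
    filter_upwards [hW', hH.eventually_ne_zero hW h0] with t ht h using ht ▸ h
  refine (eventually_pos_or_eventually_neg hcont hWc0).imp (fun h => ?_) fun h => ?_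
  · filter_upwards [h, hW'] with t ht h using h ▸ ht.le
  · filter_upwards [h, hW'] with t ht h using h ▸ ht

lemma isLittleO_of_not_isBigO (hH : IsHausdorffField H) {Φ Ψ : ℝ → ℝ} (hΦ : (Φ : GermR) ∈ H)
    (hΨ : (Ψ : GermR) ∈ H) (h : ¬ Ψ =O[atTop] Φ) : Φ =o[atTop] Ψ := by
  refine isLittleO_iff.2 fun c hc => ?_
  obtain ⟨n, hn⟩ := exists_nat_gt c⁻¹
  have hnc : 1 < c * n := by rwa [inv_lt_iff_one_lt_mul₀ hc, mul_comm] at hn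
  have hmem : ((fun t => ((n : ℝ) * Φ t) ^ 2 - Ψ t ^ 2 : ℝ → ℝ) : GermR) ∈ H :=
    H.sub_mem (H.pow_mem (H.mul_mem (natCast_mem H n) hΦ) 2) (H.pow_mem hΨ 2)
  rcases hH.eventually_nonneg_or_eventually_neg hmem with hle | hlt
  · refine absurd (IsBigO.of_bound n ?_) h
    filter_upwards [hle] with t ht
    rw [Real.norm_eq_abs, Real.norm_eq_abs, ← abs_of_nonneg (Nat.cast_nonneg (α := ℝ) n),
      ← abs_mul]
    exact sq_le_sq.1 (sub_nonneg.1 ht)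
  · filter_upwards [hlt] with t ht
    have := sq_lt_sq.1 (sub_neg.1 ht)
    rw [abs_mul, Nat.abs_cast] at this
    rw [Real.norm_eq_abs, Real.norm_eq_abs]
    nlinarith [abs_nonneg (Φ t)]

end IsHausdorffField

section ValuationSubring

variable {K : Type*} [Field K] {O : ValuationSubring K} {x y z x' y' : K}

lemma lpreceq_iff_valuation_le : LPreceq O.toSubring x y ↔ O.valuation x ≤ O.valuation y := by
  rw [ValuationSubring.valuation_le_iff]
  exact ⟨fun ⟨c, hc, h⟩ => ⟨⟨c, hc⟩, h.symm⟩, fun ⟨c, h⟩ => ⟨c, c.2, h.symm⟩⟩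

lemma lprec_iff_valuation_lt : LPrec O.toSubring x y ↔ O.valuation x < O.valuation y := by
  rw [LPrec, lpreceq_iff_valuation_le, lpreceq_iff_valuation_le, ← lt_iff_le_not_ge]

lemma lsim_iff_valuation_sub_lt : LSim O.toSubring x y ↔ O.valuation (x - y) < O.valuation y :=
  lprec_iff_valuation_lt

namespace LSim

lemma valuation_eq (h : LSim O.toSubring x y) : O.valuation x = O.valuation y :=
  Valuation.map_eq_of_sub_lt _ (lsim_iff_valuation_sub_lt.1 h)

lemma ne_zero (h : LSim O.toSubring x y) : y ≠ 0 := by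
  rintro rfl
  simpa using lsim_iff_valuation_sub_lt.1 h

lemma symm (h : LSim O.toSubring x y) : LSim O.toSubring y x := by
  rw [lsim_iff_valuation_sub_lt, Valuation.map_sub_swap, h.valuation_eq]
  exact lsim_iff_valuation_sub_lt.1 h

lemma trans (h₁ : LSim O.toSubring x y) (h₂ : LSim O.toSubring y z) : LSim O.toSubring x z := by
  rw [lsim_iff_valuation_sub_lt, ← sub_add_sub_cancel x y z]
  exact Valuation.map_add_lt _ (h₂.valuation_eq ▸ lsim_iff_valuation_sub_lt.1 h₁)
    (lsim_iff_valuation_sub_lt.1 h₂)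

lemma mul (h : LSim O.toSubring x y) (h' : LSim O.toSubring x' y') :
    LSim O.toSubring (x * x') (y * y') := by
  have hv := lsim_iff_valuation_sub_lt.1 h
  have hv' := lsim_iff_valuation_sub_lt.1 h'
  have hy : O.valuation y ≠ 0 := (Valuation.ne_zero_iff _).2 h.ne_zero
  have hy' : O.valuation y' ≠ 0 := (Valuation.ne_zero_iff _).2 h'.ne_zero
  rw [lsim_iff_valuation_sub_lt, show x * x' - y * y' = (x - y) * x' + y * (x' - y') by ring]
  refine Valuation.map_add_lt _ ?_ ?_ <;> rw [map_mul, map_mul]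
  · rw [h'.valuation_eq]
    exact mul_lt_mul_of_pos_right hv (zero_lt_iff.2 hy')
  · exact mul_lt_mul_of_pos_left hv' (zero_lt_iff.2 hy)

lemma inv (h : LSim O.toSubring x y) : LSim O.toSubring x⁻¹ y⁻¹ := by
  have hx := h.symm.ne_zero
  have hy := h.ne_zero
  have hvy : O.valuation y ≠ 0 := (Valuation.ne_zero_iff _).2 hy
  rw [lsim_iff_valuation_sub_lt, show x⁻¹ - y⁻¹ = (y - x) * (x⁻¹ * y⁻¹) by field_simp,
    map_mul, map_mul, map_inv₀, map_inv₀, h.valuation_eq, Valuation.map_sub_swap]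
  calc O.valuation (x - y) * ((O.valuation y)⁻¹ * (O.valuation y)⁻¹)
      < O.valuation y * ((O.valuation y)⁻¹ * (O.valuation y)⁻¹) :=
        mul_lt_mul_of_pos_right (lsim_iff_valuation_sub_lt.1 h)
          (zero_lt_iff.2 (mul_ne_zero (inv_ne_zero hvy) (inv_ne_zero hvy)))
    _ = (O.valuation y)⁻¹ := by rw [← mul_assoc, mul_inv_cancel₀ hvy, one_mul]

end LSim

lemma lpreceq_congr (hx : LSim O.toSubring x x') (hy : LSim O.toSubring y y') :
    LPreceq O.toSubring x y ↔ LPreceq O.toSubring x' y' := by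
  rw [lpreceq_iff_valuation_le, lpreceq_iff_valuation_le, hx.valuation_eq, hy.valuation_eq]

lemma lprec_congr (hx : LSim O.toSubring x x') (hy : LSim O.toSubring y y') :
    LPrec O.toSubring x y ↔ LPrec O.toSubring x' y' := by
  rw [lprec_iff_valuation_lt, lprec_iff_valuation_lt, hx.valuation_eq, hy.valuation_eq]

lemma lsim_congr (hx : LSim O.toSubring x x') (hy : LSim O.toSubring y y') :
    LSim O.toSubring x y ↔ LSim O.toSubring x' y' :=
  ⟨fun h => hx.symm.trans (h.trans hy), fun h => hx.trans (h.trans hy.symm)⟩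

end ValuationSubring

lemma lpreceq_zero_iff {K : Type*} [Field K] {O : Subring K} {x : K} :
    LPreceq O x 0 ↔ x = 0 :=
  ⟨fun ⟨_, _, h⟩ => by simpa using h, fun h => ⟨0, O.zero_mem, by simp [h]⟩⟩

lemma lpreceq_iff_mul_inv_mem {K : Type*} [Field K] {O : Subring K} {x y : K} (hy : y ≠ 0) :
    LPreceq O x y ↔ x * y⁻¹ ∈ O :=
  ⟨fun ⟨c, hc, h⟩ => by rwa [h, mul_inv_cancel_right₀ hy],
    fun h => ⟨_, h, by rw [inv_mul_cancel_right₀ hy]⟩⟩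

namespace IsHausdorffField

variable {H : Subring GermR} {L : Type*} [Field L] {O : Subring L}

lemma map_eq_zero_iff (hH : IsHausdorffField H) (ι : H →+* L) {φ : H} : ι φ = 0 ↔ φ = 0 := by
  refine ⟨fun h => by_contra fun hφ => ?_, fun h => h ▸ map_zero ι⟩
  obtain ⟨φ', hφφ'⟩ := hH.exists_mul_eq_one hφ
  simpa [h] using congrArg ι hφφ'

lemma dominates_iff_lpreceq (hH : IsHausdorffField H) (ι : H →+* L)
    (hcompat : ∀ h : H, ι h ∈ O ↔ Dominates (↑h : GermR) 1) (φ ψ : H) :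
    Dominates ↑φ ↑ψ ↔ LPreceq O (ι φ) (ι ψ) := by
  rcases eq_or_ne ψ 0 with rfl | hψ
  · rw [map_zero, lpreceq_zero_iff, hH.map_eq_zero_iff, ZeroMemClass.coe_zero, dominates_zero_iff,
      ZeroMemClass.coe_eq_zero]
  obtain ⟨ψ', hψψ'⟩ := hH.exists_mul_eq_one hψ
  have hιψ' : ι ψ' = (ι ψ)⁻¹ := eq_inv_of_mul_eq_one_right (by rw [← map_mul, hψψ', map_one])
  rw [lpreceq_iff_mul_inv_mem ((hH.map_eq_zero_iff ι).not.2 hψ), ← hιψ', ← map_mul, hcompat,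
    dominates_iff_dominates_one (g' := ψ') (by exact_mod_cast congrArg Subtype.val hψψ'),
    Subring.coe_mul]

lemma strictDominates_iff (hH : IsHausdorffField H) {φ ψ : GermR} (hφ : φ ∈ H) (hψ : ψ ∈ H)
    (hψ0 : ψ ≠ 0) : StrictDominates φ ψ ↔ Dominates φ ψ ∧ ¬ Dominates ψ φ := by
  induction φ using Germ.inductionOn with | h Φ =>
  induction ψ using Germ.inductionOn with | h Ψ =>
  have hΨ := hH.eventually_ne_zero hψ hψ0
  rw [strictDominates_coe, dominates_coe, dominates_coe, and_iff_right hΨ]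
  exact ⟨fun h => ⟨h.isBigO, fun h' => isLittleO_irrefl hΨ.frequently (h'.trans_isLittleO h)⟩,
    fun h => hH.isLittleO_of_not_isBigO hφ hψ h.2⟩

lemma strictDominates_iff_lprec (hH : IsHausdorffField H) (ι : H →+* L)
    (hcompat : ∀ h : H, ι h ∈ O ↔ Dominates (↑h : GermR) 1) (φ : H) {ψ : H} (hψ : ψ ≠ 0) :
    StrictDominates ↑φ ↑ψ ↔ LPrec O (ι φ) (ι ψ) := by
  rw [hH.strictDominates_iff φ.2 ψ.2 (by simpa using hψ), LPrec,
    hH.dominates_iff_lpreceq ι hcompat, hH.dominates_iff_lpreceq ι hcompat]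

lemma germSim_iff_lsim (hH : IsHausdorffField H) (ι : H →+* L)
    (hcompat : ∀ h : H, ι h ∈ O ↔ Dominates (↑h : GermR) 1) (φ : H) {ψ : H} (hψ : ψ ≠ 0) :
    GermSim ↑φ ↑ψ ↔ LSim O (ι φ) (ι ψ) := by
  simpa only [GermSim, LSim, map_sub, AddSubgroupClass.coe_sub] using
    hH.strictDominates_iff_lprec ι hcompat (φ - ψ) hψ

end IsHausdorffField

namespace SimH

variable {H : Subring GermR} {L : Type*} [Field L] {O : ValuationSubring L} {ι : H →+* L}
  {f g : GermR} {fh gh : L}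

lemma isUnit (hf : SimH H O.toSubring ι f fh) : IsUnit f :=
  let ⟨_, hfφ, _⟩ := hf
  hfφ.isUnit

lemma mul (hf : SimH H O.toSubring ι f fh) (hg : SimH H O.toSubring ι g gh) :
    SimH H O.toSubring ι (f * g) (fh * gh) :=
  let ⟨φ, hfφ, hfL⟩ := hf
  let ⟨ψ, hgψ, hgL⟩ := hg
  ⟨φ * ψ, hfφ.mul hgψ, (map_mul ι φ ψ).symm ▸ hfL.mul hgL⟩

lemma inv (hH : IsHausdorffField H) (hf : SimH H O.toSubring ι f fh) {finv : GermR}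
    (hfinv : f * finv = 1) : SimH H O.toSubring ι finv fh⁻¹ := by
  obtain ⟨φ, hfφ, hfL⟩ := hf
  obtain ⟨φ', hφφ'⟩ := hH.exists_mul_eq_one (ne_zero_of_map hfL.ne_zero)
  have hιφ' : ι φ' = (ι φ)⁻¹ := eq_inv_of_mul_eq_one_right (by rw [← map_mul, hφφ', map_one])
  exact ⟨φ', hfφ.inv hfinv (by exact_mod_cast congrArg Subtype.val hφφ'), hιφ' ▸ hfL.inv⟩

lemma dominates_iff (hH : IsHausdorffField H)
    (hcompat : ∀ h : H, ι h ∈ O ↔ Dominates (↑h : GermR) 1)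
    (hf : SimH H O.toSubring ι f fh) (hg : SimH H O.toSubring ι g gh) :
    Dominates f g ↔ LPreceq O.toSubring fh gh := by
  obtain ⟨φ, hfφ, hfL⟩ := hf
  obtain ⟨ψ, hgψ, hgL⟩ := hg
  rw [dominates_congr hfφ hgψ, hH.dominates_iff_lpreceq ι hcompat, lpreceq_congr hfL hgL]

lemma strictDominates_iff (hH : IsHausdorffField H)
    (hcompat : ∀ h : H, ι h ∈ O ↔ Dominates (↑h : GermR) 1)
    (hf : SimH H O.toSubring ι f fh) (hg : SimH H O.toSubring ι g gh) :
    StrictDominates f g ↔ LPrec O.toSubring fh gh := by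
  obtain ⟨φ, hfφ, hfL⟩ := hf
  obtain ⟨ψ, hgψ, hgL⟩ := hg
  rw [strictDominates_congr hfφ hgψ,
    hH.strictDominates_iff_lprec ι hcompat φ (ne_zero_of_map hgL.ne_zero), lprec_congr hfL hgL]

lemma germSim_iff (hH : IsHausdorffField H)
    (hcompat : ∀ h : H, ι h ∈ O ↔ Dominates (↑h : GermR) 1)
    (hf : SimH H O.toSubring ι f fh) (hg : SimH H O.toSubring ι g gh) :
    GermSim f g ↔ LSim O.toSubring fh gh := by
  obtain ⟨φ, hfφ, hfL⟩ := hf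
  obtain ⟨ψ, hgψ, hgL⟩ := hg
  rw [germSim_congr hfφ hgψ, hH.germSim_iff_lsim ι hcompat φ (ne_zero_of_map hgL.ne_zero),
    lsim_congr hfL hgL]

end SimH

theorem stmt16_general (H : Subring GermR) (hH : IsHausdorffField H)
    {L : Type*} [Field L] (O : Subring L)
    -- O is a valuation subring of L
    (hO : ∀ x : L, x ∈ O ∨ x⁻¹ ∈ O)
    (ι : H →+* L)
    -- the valuation of Ĥ = L extends that of H
    (hcompat : ∀ h : H, ι h ∈ O ↔ Dominates (↑h : GermR) 1)
    (f g : GermR) (fh gh : L)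
    (hf : SimH H O ι f fh) (hg : SimH H O ι g gh) :
    (IsUnit f ∧ ∀ finv : GermR, f * finv = 1 → SimH H O ι finv fh⁻¹) ∧
    SimH H O ι (f * g) (fh * gh) ∧
    (Dominates f g ↔ LPreceq O fh gh) ∧
    (StrictDominates f g ↔ LPrec O fh gh) ∧
    ((Dominates f g ∧ Dominates g f) ↔ (LPreceq O fh gh ∧ LPreceq O gh fh)) ∧
    (GermSim f g ↔ LSim O fh gh) := by
  obtain ⟨V, rfl⟩ : ∃ V : ValuationSubring L, V.toSubring = O :=
    ⟨{ O with mem_or_inv_mem' := hO }, rfl⟩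
  exact ⟨⟨hf.isUnit, fun _ hfinv => hf.inv hH hfinv⟩, hf.mul hg,
    hf.dominates_iff hH hcompat hg, hf.strictDominates_iff hH hcompat hg,
    and_congr (hf.dominates_iff hH hcompat hg) (hg.dominates_iff hH hcompat hf),
    hf.germSim_iff hH hcompat hg⟩

/-- Lemma on asymptotic similarity: let `H` be a Hausdorff field, `Ĥ = L` an immediate
valued field extension of `H`, `f, g ∈ 𝒞`, `f̂, ĝ ∈ Ĥ` with `f ∼_H f̂` and `g ∼_H ĝ`.
Then `1/f ∼_H 1/f̂` and `f·g ∼_H f̂·ĝ`, and `f ≼ g` in `𝒞` iff `f̂ ≼ ĝ` in `Ĥ`, and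
likewise for `≺`, `≍` and `∼`. -/
theorem stmt16 (H : Subring GermR) (hH : IsHausdorffField H)
    {L : Type*} [Field L] (O : Subring L)
    -- O is a valuation subring of L
    (hO : ∀ x : L, x ∈ O ∨ x⁻¹ ∈ O)
    (ι : H →+* L) (hι : Function.Injective ι)
    -- the valuation of Ĥ = L extends that of H
    (hcompat : ∀ h : H, ι h ∈ O ↔ Dominates (↑h : GermR) 1)
    -- Ĥ is an immediate extension of H
    (himm : ∀ x : L, x ≠ 0 → ∃ h : H, LSim O x (ι h))
    (f g : GermR) (fh gh : L)
    (hf : SimH H O ι f fh) (hg : SimH H O ι g gh) :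
    (IsUnit f ∧ ∀ finv : GermR, f * finv = 1 → SimH H O ι finv fh⁻¹) ∧
    SimH H O ι (f * g) (fh * gh) ∧
    (Dominates f g ↔ LPreceq O fh gh) ∧
    (StrictDominates f g ↔ LPrec O fh gh) ∧
    ((Dominates f g ∧ Dominates g f) ↔ (LPreceq O fh gh ∧ LPreceq O gh fh)) ∧
    (GermSim f g ↔ LSim O fh gh) :=
  stmt16_general H hH O hO ι hcompat f g fh gh hf hg
end
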